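/- arXiv:math/0405060 — 8 statements merged into one kernel-verified Lean document; each statement's English description precedes it below -/
import Mathlib

section
/- For every integer n > 3, the toric ideal I_{S_n} is generated by its elements of total degree at most n−1; that is, I_{S_n} equals the ideal generated by the set {f ∈ I_{S_n} : the total degree of f is at most n−1}. -/
/-- The toric map `φ : ℂ[x_π : π ∈ S_n] → ℂ[t_{ij}]`, `x_π ↦ ∏_i t_{i, π(i)}`. -/
noncomputable def toricMap (n : ℕ) :
    MvPolynomial (Equiv.Perm (Fin n)) ℂ →ₐ[ℂ] MvPolynomial (Fin n × Fin n) ℂ :=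
  MvPolynomial.aeval fun π : Equiv.Perm (Fin n) =>
    ∏ i : Fin n, MvPolynomial.X (R := ℂ) (i, π i)

/-- The toric ideal `I_{S_n}` is the kernel of the toric map. -/
noncomputable def toricIdeal (n : ℕ) : Ideal (MvPolynomial (Equiv.Perm (Fin n)) ℂ) :=
  RingHom.ker (toricMap n).toRingHom

/-!
Since `φ(x^a) = t^{M a}` with `M a = ∑ a_π P_π`, the ideal `I_{S_n}` is spanned by the binomials
`x^a - x^b` with `M a = M b`. Such a binomial is handled by induction on `deg a`: it suffices to
pass from `b`, by steps `x^b - x^{b'}` of degree at most `n - 1`, to some `b'` that shares a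
permutation `σ` with `a`, and then to factor out `x_σ`. A step replaces a few permutations `F` of
`b` by another decomposition of their summed matrix into permutation matrices (Birkhoff–von
Neumann over `ℕ`, via Hall), which may be chosen to contain any `π` whose graph is covered by `F`.
If some `τ` in `b` agrees with some `σ` in `a` in two places, then `τ` together with one
permutation per disagreement covers `σ` with `n - 1` permutations. Otherwise the Cauchy–Schwarz
bound `(n d)² ≤ #supp(M) · ∑ M_{ij}²`, together with `∑ M_{ij}² = ∑ a_σ b_τ agree(σ, τ) ≤ d²`,
shows that `M` has no zero entry, and a step with three permutations creates such a `τ`; this is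
where `n ≥ 4` enters.
-/

open Finset MvPolynomial

namespace MvPolynomial

variable {R σ τ : Type*} [CommRing R]

lemma monomial_add_sub_monomial_add (c a b : σ →₀ ℕ) (r : R) :
    monomial (c + a) r - monomial (c + b) r = monomial c 1 * (monomial a r - monomial b r) := by
  rw [mul_sub, monomial_mul, monomial_mul, one_mul]

/-- Each fibre of `A` carries total coefficient zero in `f`, so `f` is a combination of the
binomials `x^a - x^{a'}`, with `a'` a fixed representative of the fibre of `a`. -/
lemma mem_ideal_of_map_eq_zero {φ : MvPolynomial σ R →+ MvPolynomial τ R}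
    {A : (σ →₀ ℕ) → τ →₀ ℕ} (hφ : ∀ a r, φ (monomial a r) = monomial (A a) r)
    {I : Ideal (MvPolynomial σ R)} (hI : ∀ a b, A a = A b → monomial a 1 - monomial b 1 ∈ I)
    {f : MvPolynomial σ R} (hf : φ f = 0) : f ∈ I := by
  classical
  set rep : (σ →₀ ℕ) → σ →₀ ℕ := fun a => Function.invFun A (A a)
  have hrep : ∀ a, A (rep a) = A a := fun a => Function.invFun_eq ⟨a, rfl⟩
  have hfibre : ∀ m, ∑ a ∈ f.support with A a = m, coeff a f = 0 := fun m => by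
    have := congrArg (coeff m) hf
    rw [as_sum f, map_sum, coeff_sum] at this
    simpa [hφ, coeff_monomial, sum_filter] using this
  have hreps : ∑ a ∈ f.support, monomial (rep a) (coeff a f) = 0 := by
    rw [← sum_fiberwise_of_maps_to (g := A) (t := f.support.image A)
      fun a ha => mem_image_of_mem A ha]
    refine sum_eq_zero fun m _ => ?_
    calc ∑ a ∈ f.support with A a = m, monomial (rep a) (coeff a f)
        = ∑ a ∈ f.support with A a = m, monomial (Function.invFun A m) (coeff a f) :=
          sum_congr rfl fun a ha => by simp only [rep, (mem_filter.mp ha).2]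
      _ = 0 := by rw [← map_sum, hfibre, map_zero]
  have hf : f = ∑ a ∈ f.support, C (coeff a f) * (monomial a 1 - monomial (rep a) 1) := by
    conv_lhs => rw [as_sum f]
    simp only [mul_sub, C_mul_monomial, mul_one, sum_sub_distrib, hreps, sub_zero]
  rw [hf]
  exact sum_mem fun a _ => Ideal.mul_mem_left _ _ (hI a (rep a) (hrep a).symm)

end MvPolynomial

namespace Toric

section Combinatorics

variable {α : Type*} [Fintype α]

noncomputable def permExp (π : Equiv.Perm α) : α × α →₀ ℕ :=
  ∑ i, Finsupp.single (i, π i) 1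

noncomputable def matrixOf : (Equiv.Perm α →₀ ℕ) →ₗ[ℕ] (α × α →₀ ℕ) :=
  Finsupp.linearCombination ℕ permExp

def HasLineSums (M : α × α →₀ ℕ) (k : ℕ) : Prop :=
  (∀ i, ∑ j, M (i, j) = k) ∧ ∀ j, ∑ i, M (i, j) = k

def CoversGraph (F : Finset (Equiv.Perm α)) (π : Equiv.Perm α) : Prop :=
  ∀ i, ∃ ρ ∈ F, ρ i = π i

lemma matrixOf_single (π : Equiv.Perm α) (k : ℕ) :
    matrixOf (Finsupp.single π k) = k • permExp π :=
  Finsupp.linearCombination_single ℕ k π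

lemma matrixOf_apply (a : Equiv.Perm α →₀ ℕ) (e : α × α) :
    matrixOf a e = ∑ π ∈ a.support, a π * permExp π e := by
  simp [matrixOf, Finsupp.linearCombination_apply, Finsupp.sum]

lemma HasLineSums.of_add {M N : α × α →₀ ℕ} {m l : ℕ} (h : HasLineSums (M + N) m)
    (hN : HasLineSums N l) : HasLineSums M (m - l) := by
  refine ⟨fun i => ?_, fun j => ?_⟩
  · have := h.1 i
    simp only [Finsupp.add_apply, Finset.sum_add_distrib, hN.1 i] at this
    omega
  · have := h.2 j
    simp only [Finsupp.add_apply, Finset.sum_add_distrib, hN.2 j] at this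
    omega

lemma HasLineSums.eq_zero {M : α × α →₀ ℕ} (h : HasLineSums M 0) : M = 0 := by
  ext ⟨i, j⟩
  exact Finset.sum_eq_zero_iff.mp (h.1 i) j (mem_univ j)

variable [DecidableEq α]

def agreements (σ τ : Equiv.Perm α) : ℕ :=
  #{i | σ i = τ i}

lemma permExp_apply (π : Equiv.Perm α) (i j : α) :
    permExp π (i, j) = if π i = j then 1 else 0 := by
  rw [permExp, Finsupp.finsetSum_apply, Finset.sum_eq_single i]
  · simp [Finsupp.single_apply]
  · intro r _ hr
    simp [hr]
  · simp

lemma hasLineSums_permExp (π : Equiv.Perm α) : HasLineSums (permExp π) 1 := by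
  refine ⟨fun i => ?_, fun j => ?_⟩
  · simp [permExp_apply]
  · simp [permExp_apply, ← Equiv.eq_symm_apply]

lemma hasLineSums_matrixOf (a : Equiv.Perm α →₀ ℕ) : HasLineSums (matrixOf a) a.degree := by
  refine ⟨fun i => ?_, fun j => ?_⟩ <;>
  · simp only [matrixOf_apply, Finsupp.degree_apply]
    rw [Finset.sum_comm]
    refine Finset.sum_congr rfl fun π _ => ?_
    rw [← Finset.mul_sum]
    simp [(hasLineSums_permExp π).1, (hasLineSums_permExp π).2]

lemma degree_eq_of_matrixOf_eq [Nonempty α] {a b : Equiv.Perm α →₀ ℕ}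
    (h : matrixOf a = matrixOf b) : a.degree = b.degree := by
  obtain ⟨i⟩ := ‹Nonempty α›
  rw [← (hasLineSums_matrixOf a).1 i, h, (hasLineSums_matrixOf b).1 i]

lemma permExp_le_iff {π : Equiv.Perm α} {M : α × α →₀ ℕ} :
    permExp π ≤ M ↔ ∀ i, 0 < M (i, π i) := by
  refine ⟨fun h i => ?_, fun h => ?_⟩
  · simpa [permExp_apply, Nat.one_le_iff_ne_zero, Nat.pos_iff_ne_zero] using h (i, π i)
  · rintro ⟨i, j⟩
    rw [permExp_apply]
    split_ifs with hij
    · exact hij ▸ h i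
    · exact Nat.zero_le _

lemma matrixOf_pos_iff {a : Equiv.Perm α →₀ ℕ} {i j : α} :
    0 < matrixOf a (i, j) ↔ ∃ π ∈ a.support, π i = j := by
  simp only [matrixOf_apply, permExp_apply, mul_ite, mul_one, mul_zero, sum_pos_iff,
    Finsupp.mem_support_iff, Nat.pos_iff_ne_zero, ne_eq, ite_eq_right_iff, Classical.not_imp]
  grind

lemma HasLineSums.exists_permExp_le {M : α × α →₀ ℕ} {k : ℕ} (h : HasLineSums M (k + 1)) :
    ∃ π, permExp π ≤ M := by
  set t : α → Finset α := fun i => {j | M (i, j) ≠ 0}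
  have hall : ∀ s : Finset α, #s ≤ #(s.biUnion t) := by
    intro s
    have hrow : ∀ i ∈ s, ∑ j ∈ s.biUnion t, M (i, j) = k + 1 := fun i hi => by
      rw [← h.1 i]
      refine Finset.sum_subset (subset_univ _) fun j _ hj => ?_
      by_contra hne
      exact hj (mem_biUnion.mpr ⟨i, hi, by simpa [t] using hne⟩)
    refine Nat.le_of_mul_le_mul_right ?_ k.succ_pos
    calc #s * (k + 1) = ∑ i ∈ s, ∑ j ∈ s.biUnion t, M (i, j) := by
          rw [Finset.sum_congr rfl hrow, sum_const, smul_eq_mul]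
      _ = ∑ j ∈ s.biUnion t, ∑ i ∈ s, M (i, j) := Finset.sum_comm
      _ ≤ ∑ j ∈ s.biUnion t, ∑ i, M (i, j) :=
          sum_le_sum fun j _ => sum_le_sum_of_subset (subset_univ s)
      _ = #(s.biUnion t) * (k + 1) := by
          rw [Finset.sum_congr rfl fun j _ => h.2 j, sum_const, smul_eq_mul]
  obtain ⟨f, hf, hft⟩ := (Finset.all_card_le_biUnion_card_iff_exists_injective t).mp hall
  refine ⟨Equiv.ofBijective f hf.bijective_of_finite, permExp_le_iff.mpr fun i => ?_⟩
  simpa [t, Nat.pos_iff_ne_zero] using hft i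

lemma HasLineSums.exists_matrixOf_eq {M : α × α →₀ ℕ} {k : ℕ} (h : HasLineSums M k) :
    ∃ c, matrixOf c = M := by
  induction k generalizing M with
  | zero => exact ⟨0, by rw [map_zero, h.eq_zero]⟩
  | succ k ih =>
    obtain ⟨π, hπ⟩ := h.exists_permExp_le
    have hM : M - permExp π + permExp π = M := tsub_add_cancel_of_le hπ
    obtain ⟨c, hc⟩ := ih ((hM.symm ▸ h).of_add (hasLineSums_permExp π))
    exact ⟨c + Finsupp.single π 1, by rw [map_add, hc, matrixOf_single, one_smul, hM]⟩

lemma exists_mem_support_matrixOf_eq {π : Equiv.Perm α} {s : Equiv.Perm α →₀ ℕ}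
    (hπ : permExp π ≤ matrixOf s) : ∃ t, π ∈ t.support ∧ matrixOf t = matrixOf s := by
  have hs : matrixOf s - permExp π + permExp π = matrixOf s := tsub_add_cancel_of_le hπ
  obtain ⟨c, hc⟩ := HasLineSums.exists_matrixOf_eq
    ((hs.symm ▸ hasLineSums_matrixOf s).of_add (hasLineSums_permExp π))
  refine ⟨c + Finsupp.single π 1, by simp, ?_⟩
  rw [map_add, hc, matrixOf_single, one_smul, hs]

lemma two_le_agreements {σ τ : Equiv.Perm α} {p q : α} (hpq : p ≠ q) (hp : σ p = τ p)
    (hq : σ q = τ q) : 2 ≤ agreements σ τ := by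
  rw [agreements, ← card_pair hpq]
  refine card_le_card fun x hx => ?_
  rcases mem_insert.mp hx with rfl | hx
  · simpa using hp
  · simpa [mem_singleton.mp hx] using hq

lemma exists_coversGraph_of_two_le_agreements {B : Finset (Equiv.Perm α)} {σ τ : Equiv.Perm α}
    (hB : CoversGraph B σ) (hτ : τ ∈ B) (h2 : 2 ≤ agreements σ τ) :
    ∃ F ⊆ B, #F ≤ Fintype.card α - 1 ∧ CoversGraph F σ := by
  choose g hgB hg using hB
  set D : Finset α := {i | σ i ≠ τ i}
  refine ⟨insert τ (D.image g), ?_, ?_, fun i => ?_⟩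
  · simpa [insert_subset_iff, hτ, image_subset_iff] using fun i _ => hgB i
  · have hD : #D + agreements σ τ = Fintype.card α := by
      rw [add_comm, ← card_univ]
      exact card_filter_add_card_filter_not _
    have := card_image_le (s := D) (f := g)
    have := card_insert_le τ (D.image g)
    omega
  · by_cases h : σ i = τ i
    · exact ⟨τ, mem_insert_self _ _, h.symm⟩
    · exact ⟨g i, mem_insert_of_mem (mem_image_of_mem g (by simp [D, h])), hg i⟩

lemma exists_two_le_agreements_coversGraph {B : Finset (Equiv.Perm α)}
    (hB : ∀ i j, ∃ ρ ∈ B, ρ i = j) {p q : α} (hpq : p ≠ q) (σ : Equiv.Perm α) :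
    ∃ π, 2 ≤ agreements σ π ∧ ∃ F ⊆ B, #F ≤ 3 ∧ CoversGraph F π := by
  obtain ⟨τ₁, h₁B, h₁⟩ := hB p (σ p)
  obtain ⟨τ₂, h₂B, h₂⟩ := hB q (σ q)
  set r := τ₁.symm (σ q)
  obtain ⟨τ₃, h₃B, h₃⟩ := hB r (τ₁ q)
  -- `π` is `τ₁` with the values at `q` and `r` exchanged: `π q = σ q` is covered by `τ₂`,
  -- `π r = τ₁ q` by `τ₃`, and every other value by `τ₁`.
  set π := τ₁ * Equiv.swap q r
  have hπq : π q = σ q := by simp [π, r]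
  have hpr : p ≠ r := fun h => hpq (σ.injective (by rw [← h₁, h, Equiv.apply_symm_apply]))
  have hπp : π p = σ p := by simp [π, Equiv.swap_apply_of_ne_of_ne hpq hpr, h₁]
  refine ⟨π, two_le_agreements hpq hπp.symm hπq.symm, {τ₁, τ₂, τ₃}, ?_, card_le_three,
    fun i => ?_⟩
  · simp [insert_subset_iff, h₁B, h₂B, h₃B]
  · by_cases hiq : i = q
    · exact ⟨τ₂, by simp, by rw [hiq, h₂, hπq]⟩
    by_cases hir : i = r
    · exact ⟨τ₃, by simp, by simp [hir, h₃, π]⟩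
    exact ⟨τ₁, by simp, by simp [π, Equiv.swap_apply_of_ne_of_ne hiq hir]⟩

lemma sum_permExp_mul_permExp (σ τ : Equiv.Perm α) :
    ∑ e, permExp σ e * permExp τ e = agreements σ τ := by
  rw [agreements, card_filter]
  simp [Fintype.sum_prod_type, permExp_apply]

lemma sum_matrixOf_mul_matrixOf (a b : Equiv.Perm α →₀ ℕ) :
    ∑ e, matrixOf a e * matrixOf b e =
      ∑ σ ∈ a.support, ∑ τ ∈ b.support, a σ * b τ * agreements σ τ := by
  calc ∑ e, matrixOf a e * matrixOf b e
      = ∑ e, ∑ σ ∈ a.support, ∑ τ ∈ b.support, a σ * b τ * (permExp σ e * permExp τ e) := by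
        refine sum_congr rfl fun e _ => ?_
        rw [matrixOf_apply, matrixOf_apply, sum_mul_sum]
        exact sum_congr rfl fun σ _ => sum_congr rfl fun τ _ => by ring
    _ = ∑ σ ∈ a.support, ∑ τ ∈ b.support, ∑ e, a σ * b τ * (permExp σ e * permExp τ e) := by
        rw [sum_comm]
        exact sum_congr rfl fun σ _ => sum_comm
    _ = _ := by simp only [← mul_sum, sum_permExp_mul_permExp]

lemma sum_matrixOf (a : Equiv.Perm α →₀ ℕ) :
    ∑ e, matrixOf a e = Fintype.card α * a.degree := by
  simp [Fintype.sum_prod_type, (hasLineSums_matrixOf a).1]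

lemma matrixOf_pos_of_agreements_le_one {a b : Equiv.Perm α →₀ ℕ}
    (hab : matrixOf a = matrixOf b) (ha : a ≠ 0)
    (h : ∀ σ ∈ a.support, ∀ τ ∈ b.support, agreements σ τ ≤ 1) (e : α × α) :
    0 < matrixOf a e := by
  have : Nonempty α := ⟨e.1⟩
  set M := matrixOf a
  set d := a.degree
  have hd : 0 < d := Nat.pos_of_ne_zero ((Finsupp.degree_eq_zero_iff a).not.mpr ha)
  have hsq : ∑ e, M e ^ 2 ≤ d ^ 2 := calc
    ∑ e, M e ^ 2 = ∑ σ ∈ a.support, ∑ τ ∈ b.support, a σ * b τ * agreements σ τ := by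
      simp only [sq, ← sum_matrixOf_mul_matrixOf, M, ← hab]
    _ ≤ ∑ σ ∈ a.support, ∑ τ ∈ b.support, a σ * b τ :=
      sum_le_sum fun σ hσ => sum_le_sum fun τ hτ => mul_le_of_le_one_right' (h σ hσ τ hτ)
    _ = d ^ 2 := by
      rw [← sum_mul_sum, sq]
      exact congrArg (d * ·) (degree_eq_of_matrixOf_eq hab).symm
  have hcs : (Fintype.card α * d) ^ 2 ≤ #M.support * d ^ 2 := calc
    (Fintype.card α * d) ^ 2 = (∑ e ∈ M.support, M e) ^ 2 := by
      rw [← sum_matrixOf, ← Finsupp.degree_eq_sum]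
      rfl
    _ ≤ #M.support * ∑ e ∈ M.support, M e ^ 2 := sq_sum_le_card_mul_sum_sq
    _ ≤ #M.support * d ^ 2 := by
      gcongr
      exact (sum_le_sum_of_subset (subset_univ _)).trans hsq
  have hcard : Fintype.card (α × α) ≤ #M.support := by
    rw [mul_pow] at hcs
    rw [Fintype.card_prod, ← sq]
    exact Nat.le_of_mul_le_mul_right hcs (by positivity)
  have huniv : M.support = univ := eq_univ_of_card _ (le_antisymm (card_le_univ _) hcard)
  exact Nat.pos_of_ne_zero (Finsupp.mem_support_iff.mp (huniv ▸ mem_univ e))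

end Combinatorics

section Polynomial

variable {n : ℕ}

lemma toricMap_monomial (a : Equiv.Perm (Fin n) →₀ ℕ) (r : ℂ) :
    toricMap n (monomial a r) = monomial (matrixOf a) r := by
  have hX : ∀ π : Equiv.Perm (Fin n),
      ∏ i, (X (i, π i) : MvPolynomial (Fin n × Fin n) ℂ) = monomial (permExp π) 1 := fun π => by
    simp only [X, permExp, monomial_sum_one]
  rw [toricMap, aeval_monomial, algebraMap_eq, matrixOf, Finsupp.linearCombination_apply,
    monomial_finsupp_sum_index]
  simp [hX, monomial_pow]

noncomputable def lowDegreeSpan (n : ℕ) : Ideal (MvPolynomial (Equiv.Perm (Fin n)) ℂ) :=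
  Ideal.span {f | f ∈ toricIdeal n ∧ f.totalDegree ≤ n - 1}

lemma monomial_sub_monomial_mem_toricIdeal {a b : Equiv.Perm (Fin n) →₀ ℕ}
    (h : matrixOf a = matrixOf b) : monomial a 1 - monomial b 1 ∈ toricIdeal n := by
  simp [toricIdeal, RingHom.mem_ker, toricMap_monomial, h]

lemma monomial_sub_monomial_mem_lowDegreeSpan (hn : 0 < n) {a b : Equiv.Perm (Fin n) →₀ ℕ}
    (h : matrixOf a = matrixOf b) (ha : a.degree ≤ n - 1) :
    monomial a 1 - monomial b 1 ∈ lowDegreeSpan n := by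
  have : Nonempty (Fin n) := Fin.pos_iff_nonempty.mp hn
  refine Ideal.subset_span ⟨monomial_sub_monomial_mem_toricIdeal h, (totalDegree_sub _ _).trans ?_⟩
  rw [totalDegree_monomial _ one_ne_zero, totalDegree_monomial _ one_ne_zero]
  have hb : b.degree ≤ n - 1 := degree_eq_of_matrixOf_eq h ▸ ha
  exact max_le ha hb

lemma exists_move (hn : 0 < n) {b : Equiv.Perm (Fin n) →₀ ℕ} {F : Finset (Equiv.Perm (Fin n))}
    {π : Equiv.Perm (Fin n)} (hF : F ⊆ b.support) (hcard : #F ≤ n - 1) (hπ : CoversGraph F π) :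
    ∃ b', π ∈ b'.support ∧ matrixOf b' = matrixOf b ∧
      monomial b 1 - monomial b' 1 ∈ lowDegreeSpan n := by
  set s : Equiv.Perm (Fin n) →₀ ℕ := ∑ ρ ∈ F, Finsupp.single ρ 1
  have hs : ∀ ρ, s ρ = if ρ ∈ F then 1 else 0 := fun ρ => by
    simp [s, Finsupp.finsetSum_apply, Finsupp.single_apply]
  have hsb : s ≤ b := fun ρ => by
    rw [hs]
    split_ifs with h
    · exact Nat.one_le_iff_ne_zero.mpr (Finsupp.mem_support_iff.mp (hF h))
    · exact Nat.zero_le _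
  have hdeg : s.degree = #F := by simp [s]
  have hsupp : s.support = F := by
    ext ρ
    simp [hs]
  obtain ⟨t, hπt, ht⟩ := exists_mem_support_matrixOf_eq
    (permExp_le_iff.mpr fun i => matrixOf_pos_iff.mpr (hsupp ▸ hπ i))
  have hb : b - s + s = b := tsub_add_cancel_of_le hsb
  refine ⟨b - s + t, ?_, by rw [map_add, ht, ← map_add, hb], ?_⟩
  · simp only [Finsupp.mem_support_iff, Finsupp.add_apply] at hπt ⊢
    omega
  · have key := monomial_add_sub_monomial_add (b - s) s t (1 : ℂ)
    rw [hb] at key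
    rw [key]
    exact Ideal.mul_mem_left _ _ (monomial_sub_monomial_mem_lowDegreeSpan hn ht.symm (hdeg ▸ hcard))

lemma exists_agreeing_twice (hn : 3 < n) {a b : Equiv.Perm (Fin n) →₀ ℕ}
    (hab : matrixOf a = matrixOf b) (ha : a ≠ 0) :
    ∃ σ ∈ a.support, ∃ b₁, matrixOf b₁ = matrixOf b ∧
      monomial b 1 - monomial b₁ 1 ∈ lowDegreeSpan n ∧ ∃ τ ∈ b₁.support, 2 ≤ agreements σ τ := by
  by_cases h : ∃ σ ∈ a.support, ∃ τ ∈ b.support, 2 ≤ agreements σ τ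
  · obtain ⟨σ, hσ, τ, hτ, h2⟩ := h
    exact ⟨σ, hσ, b, rfl, by simp, τ, hτ, h2⟩
  push Not at h
  have hfull : ∀ i j, ∃ ρ ∈ b.support, ρ i = j := fun i j => matrixOf_pos_iff.mp <|
    hab ▸ matrixOf_pos_of_agreements_le_one hab ha
      (fun σ hσ τ hτ => Nat.le_of_lt_succ (h σ hσ τ hτ)) (i, j)
  obtain ⟨σ, hσ⟩ := Finsupp.support_nonempty_iff.mpr ha
  obtain ⟨π, h2, F, hFb, hF3, hFπ⟩ := exists_two_le_agreements_coversGraph hfull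
    (p := ⟨0, by omega⟩) (q := ⟨1, by omega⟩) (by simp [Fin.ext_iff]) σ
  obtain ⟨b₁, hπ, hb₁, hmem⟩ := exists_move (by omega) hFb (by omega) hFπ
  exact ⟨σ, hσ, b₁, hb₁, hmem, π, hπ, h2⟩

lemma exists_common_perm (hn : 3 < n) {a b : Equiv.Perm (Fin n) →₀ ℕ}
    (hab : matrixOf a = matrixOf b) (ha : a ≠ 0) :
    ∃ σ ∈ a.support, ∃ b', σ ∈ b'.support ∧ matrixOf b' = matrixOf b ∧
      monomial b 1 - monomial b' 1 ∈ lowDegreeSpan n := by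
  obtain ⟨σ, hσ, b₁, hb₁, hmem₁, τ, hτ, h2⟩ := exists_agreeing_twice hn hab ha
  have hcov : CoversGraph b₁.support σ := fun i =>
    matrixOf_pos_iff.mp (by rw [hb₁, ← hab]; exact matrixOf_pos_iff.mpr ⟨σ, hσ, rfl⟩)
  obtain ⟨F, hF, hcard, hFσ⟩ := exists_coversGraph_of_two_le_agreements hcov hτ h2
  obtain ⟨b₂, hσ₂, hb₂, hmem₂⟩ := exists_move (by omega) hF (by simpa using hcard) hFσ
  refine ⟨σ, hσ, b₂, hσ₂, hb₂.trans hb₁, ?_⟩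
  simpa using add_mem hmem₁ hmem₂

lemma monomial_sub_monomial_mem_lowDegreeSpan_of_matrixOf_eq (hn : 3 < n)
    {a b : Equiv.Perm (Fin n) →₀ ℕ} (hab : matrixOf a = matrixOf b) :
    monomial a 1 - monomial b 1 ∈ lowDegreeSpan n := by
  have : Nonempty (Fin n) := ⟨⟨0, by omega⟩⟩
  induction hd : a.degree using Nat.strong_induction_on generalizing a b with
  | _ d ih =>
  rcases eq_or_ne a 0 with rfl | ha
  · have hb : b = 0 := (Finsupp.degree_eq_zero_iff b).mp
      (by rw [← degree_eq_of_matrixOf_eq hab, map_zero])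
    simp [hb]
  obtain ⟨σ, hσa, b', hσb', hb', hmem⟩ := exists_common_perm hn hab ha
  have hsplit : ∀ c : Equiv.Perm (Fin n) →₀ ℕ, σ ∈ c.support →
      ∃ c₀, Finsupp.single σ 1 + c₀ = c := fun c hc =>
    ⟨_, add_tsub_cancel_of_le (Finsupp.single_le_iff.mpr
      (Nat.one_le_iff_ne_zero.mpr (Finsupp.mem_support_iff.mp hc)))⟩
  obtain ⟨a₀, rfl⟩ := hsplit a hσa
  obtain ⟨b₀, rfl⟩ := hsplit b' hσb'
  have h₀ : matrixOf a₀ = matrixOf b₀ :=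
    add_left_cancel (by rw [← map_add, ← map_add, hab, hb'])
  have hlt : a₀.degree < d := by
    rw [map_add, Finsupp.degree_single] at hd
    omega
  have key := Ideal.mul_mem_left _ (monomial (Finsupp.single σ 1) 1) (ih _ hlt h₀ rfl)
  rw [← monomial_add_sub_monomial_add] at key
  simpa using sub_mem key hmem

theorem toricIdeal_le_lowDegreeSpan (hn : 3 < n) : toricIdeal n ≤ lowDegreeSpan n :=
  fun _ hf => mem_ideal_of_map_eq_zero (φ := (toricMap n).toAddMonoidHom)
    (fun a r => toricMap_monomial a r)
    (fun _ _ h => monomial_sub_monomial_mem_lowDegreeSpan_of_matrixOf_eq hn h) hf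

end Polynomial

end Toric

/-- For `n > 3`, the toric ideal `I_{S_n}` is generated by its elements of total degree
at most `n - 1`. -/
theorem toricIdeal_generated_in_degree_le_sub_one (n : ℕ) (hn : 3 < n) :
    toricIdeal n =
      Ideal.span {f : MvPolynomial (Equiv.Perm (Fin n)) ℂ |
        f ∈ toricIdeal n ∧ f.totalDegree ≤ n - 1} :=
  le_antisymm (Toric.toricIdeal_le_lowDegreeSpan hn) (Ideal.span_le.mpr fun _ hf => hf.1)
end

section
/- Let n > 3 and let S and T be finite multisets of permutations of {1,…,n} of the same cardinality such that the sums of the permutation matrices of the elements of S and of T are equal. Then there is a finite sequence S = S_0, S_1, …, S_m = T of multisets of permutations, each with the same sum of permutation matrices, such that for each i the multiset differences S_i \ S_{i+1} and S_{i+1} \ S_i each have cardinality at most n−1. -/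
/-!
Induct on `T`. For `τ ∈ T`, the matrix sum of `S` dominates the permutation matrix of `τ`, so
every `i` is sent to `τ i` by some element of `S`. One move replaces a sub-multiset `F ≤ S` with
`|F| ≤ n - 1` whose matrix sum dominates that of `τ` by `τ` together with a decomposition of the
remainder into permutation matrices (Hall's theorem for semimagic ℕ-matrices). Such an `F` exists
as soon as some `σ ∈ S` agrees with `τ` at two points: take `σ` and one witness for each point
where `σ` and `τ` differ. Otherwise the witnesses `c l` agree with `τ` exactly at `l`, and for a
fixed `z` the `n - 1` witnesses with `l ≠ z` already dominate a permutation agreeing with `τ` at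
two points (found from the cycles of the `τ⁻¹ * c l` and Hall's theorem; this needs `n ≥ 4`);
a first move brings it into `S`. Once `τ ∈ S`, cancel it on both sides.
-/

/-- The permutation matrix of `π`: entry `(i,j)` is `1` if `π i = j`, else `0`. -/
def permMat (n : ℕ) (π : Equiv.Perm (Fin n)) : Matrix (Fin n) (Fin n) ℕ :=
  Matrix.of fun i j => if π i = j then 1 else 0

open Finset Equiv Relation

section Semimagic

variable {ι : Type*} [Fintype ι]

def IsSemimagic (M : Matrix ι ι ℕ) (k : ℕ) : Prop :=
  (∀ i, ∑ j, M i j = k) ∧ ∀ j, ∑ i, M i j = k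

theorem IsSemimagic.zero : IsSemimagic (0 : Matrix ι ι ℕ) 0 :=
  ⟨fun _ => by simp, fun _ => by simp⟩

theorem IsSemimagic.add {M N : Matrix ι ι ℕ} {k l : ℕ} (hM : IsSemimagic M k)
    (hN : IsSemimagic N l) : IsSemimagic (M + N) (k + l) :=
  ⟨fun i => by simp [sum_add_distrib, hM.1, hN.1],
    fun j => by simp [sum_add_distrib, hM.2, hN.2]⟩

theorem IsSemimagic.of_add_left {M N : Matrix ι ι ℕ} {k l : ℕ} (hM : IsSemimagic M k)
    (hMN : IsSemimagic (M + N) (k + l)) : IsSemimagic N l := by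
  refine ⟨fun i => ?_, fun j => ?_⟩
  · have := hMN.1 i
    simp only [Matrix.add_apply, sum_add_distrib, hM.1] at this
    omega
  · have := hMN.2 j
    simp only [Matrix.add_apply, sum_add_distrib, hM.2] at this
    omega

theorem IsSemimagic.eq_zero {M : Matrix ι ι ℕ} (hM : IsSemimagic M 0) : M = 0 := by
  ext i j
  exact sum_eq_zero_iff.1 (hM.1 i) j (mem_univ j)

theorem IsSemimagic.exists_perm_forall_pos [DecidableEq ι] {M : Matrix ι ι ℕ} {k : ℕ}
    (hM : IsSemimagic M k) (hk : 0 < k) : ∃ σ : Perm ι, ∀ i, 0 < M i (σ i) := by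
  let t : ι → Finset ι := fun i => {j | 0 < M i j}
  have hall : ∀ s : Finset ι, #s ≤ #(s.biUnion t) := by
    intro s
    refine Nat.le_of_mul_le_mul_left ?_ hk
    calc k * #s = ∑ j, ∑ i ∈ s, M i j := by
          rw [sum_comm]; simp [hM.1, mul_comm]
      _ = ∑ j ∈ s.biUnion t, ∑ i ∈ s, M i j := by
          refine (sum_subset (subset_univ _) fun j _ hj => sum_eq_zero fun i hi => ?_).symm
          by_contra h
          have hj' : j ∈ t i := by simp only [t, mem_filter, mem_univ, true_and]; omega
          exact hj (mem_biUnion.2 ⟨i, hi, hj'⟩)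
      _ ≤ ∑ j ∈ s.biUnion t, ∑ i, M i j :=
          sum_le_sum fun j _ => sum_le_sum_of_subset (subset_univ s)
      _ = k * #(s.biUnion t) := by simp [hM.2, mul_comm]
  obtain ⟨f, hf, hft⟩ := (all_card_le_biUnion_card_iff_exists_injective t).1 hall
  exact ⟨Equiv.ofBijective f hf.bijective_of_finite, fun i => by simpa [t] using hft i⟩

end Semimagic

section PermMat

variable {n : ℕ}

theorem sum_map_permMat_apply (S : Multiset (Perm (Fin n))) (i j : Fin n) :
    (S.map (permMat n)).sum i j = S.countP (fun σ => σ i = j) := by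
  induction S using Multiset.induction_on with
  | empty => rfl
  | cons σ S ih => simp [Multiset.countP_cons, ih, permMat, add_comm]

theorem sum_map_permMat_apply_pos_iff {S : Multiset (Perm (Fin n))} {i j : Fin n} :
    0 < (S.map (permMat n)).sum i j ↔ ∃ σ ∈ S, σ i = j := by
  rw [sum_map_permMat_apply, Multiset.countP_pos]

theorem isSemimagic_permMat (σ : Perm (Fin n)) : IsSemimagic (permMat n σ) 1 := by
  refine ⟨fun i => by simp [permMat], fun j => ?_⟩
  simp [permMat, ← Equiv.eq_symm_apply]

theorem isSemimagic_sum_map_permMat (S : Multiset (Perm (Fin n))) :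
    IsSemimagic (S.map (permMat n)).sum (Multiset.card S) := by
  induction S using Multiset.induction_on with
  | empty => exact IsSemimagic.zero
  | cons σ S ih => simpa [add_comm] using (isSemimagic_permMat σ).add ih

theorem permMat_add_tsub {M : Matrix (Fin n) (Fin n) ℕ} {σ : Perm (Fin n)}
    (hσ : ∀ i, 0 < M i (σ i)) : permMat n σ + (M - permMat n σ) = M := by
  ext i j
  by_cases h : σ i = j
  · have := hσ i
    simp only [h, permMat, Matrix.add_apply, Matrix.sub_apply, Matrix.of_apply, if_true] at this ⊢
    omega
  · simp [permMat, h]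

theorem IsSemimagic.tsub_permMat {M : Matrix (Fin n) (Fin n) ℕ} {k : ℕ}
    (hM : IsSemimagic M (k + 1)) {σ : Perm (Fin n)} (hσ : ∀ i, 0 < M i (σ i)) :
    IsSemimagic (M - permMat n σ) k :=
  (isSemimagic_permMat σ).of_add_left (by rwa [permMat_add_tsub hσ, add_comm])

theorem IsSemimagic.exists_sum_map_permMat_cons_eq {M : Matrix (Fin n) (Fin n) ℕ} {k : ℕ}
    (hM : IsSemimagic M (k + 1)) {σ : Perm (Fin n)} (hσ : ∀ i, 0 < M i (σ i)) :
    ∃ B : Multiset (Perm (Fin n)),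
      Multiset.card B = k ∧ ((σ ::ₘ B).map (permMat n)).sum = M := by
  induction k generalizing M σ with
  | zero => exact ⟨0, rfl, by simpa [(hM.tsub_permMat hσ).eq_zero] using permMat_add_tsub hσ⟩
  | succ k ih =>
    obtain ⟨τ, hτ⟩ := (hM.tsub_permMat hσ).exists_perm_forall_pos k.succ_pos
    obtain ⟨B, hB, hBM⟩ := ih (hM.tsub_permMat hσ) hτ
    refine ⟨τ ::ₘ B, by simp [hB], ?_⟩
    rw [Multiset.map_cons, Multiset.sum_cons, hBM, permMat_add_tsub hσ]

end PermMat

def IsMove (n : ℕ) (S T : Multiset (Perm (Fin n))) : Prop :=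
  (S.map (permMat n)).sum = (T.map (permMat n)).sum ∧
    Multiset.card (S - T) ≤ n - 1 ∧ Multiset.card (T - S) ≤ n - 1

section Moves

variable {n : ℕ}

theorem isMove_of_card_le {S T : Multiset (Perm (Fin n))}
    (h : (S.map (permMat n)).sum = (T.map (permMat n)).sum)
    (hS : Multiset.card S ≤ n - 1) (hT : Multiset.card T ≤ n - 1) : IsMove n S T :=
  ⟨h, (Multiset.card_le_card tsub_le_self).trans hS,
    (Multiset.card_le_card tsub_le_self).trans hT⟩

theorem IsMove.add_left {S T : Multiset (Perm (Fin n))} (h : IsMove n S T)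
    (A : Multiset (Perm (Fin n))) : IsMove n (A + S) (A + T) := by
  refine ⟨?_, ?_, ?_⟩
  · simp [h.1]
  · rw [add_tsub_add_eq_tsub_left]; exact h.2.1
  · rw [add_tsub_add_eq_tsub_left]; exact h.2.2

theorem isMove_tsub_add {S F A : Multiset (Perm (Fin n))} (hFS : F ≤ S)
    (h : (F.map (permMat n)).sum = (A.map (permMat n)).sum)
    (hF : Multiset.card F ≤ n - 1) (hA : Multiset.card A ≤ n - 1) : IsMove n S (S - F + A) := by
  simpa [tsub_add_cancel_of_le hFS] using (isMove_of_card_le h hF hA).add_left (S - F)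

theorem sum_map_permMat_eq_of_reflTransGen {S T : Multiset (Perm (Fin n))}
    (h : ReflTransGen (IsMove n) S T) :
    (S.map (permMat n)).sum = (T.map (permMat n)).sum := by
  induction h with
  | refl => rfl
  | tail _ hmove ih => exact ih.trans hmove.1

theorem exists_isMove_mem_of_le {S F : Multiset (Perm (Fin n))} (hFS : F ≤ S)
    (hF : Multiset.card F ≤ n - 1) (hn : 0 < n) {τ : Perm (Fin n)}
    (hτ : ∀ i, ∃ σ ∈ F, σ i = τ i) : ∃ S', IsMove n S S' ∧ τ ∈ S' := by
  obtain ⟨k, hk⟩ : ∃ k, Multiset.card F = k + 1 := by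
    obtain ⟨σ, hσ, -⟩ := hτ ⟨0, hn⟩
    exact ⟨_, (Nat.succ_pred_eq_of_pos (Multiset.card_pos_iff_exists_mem.2 ⟨σ, hσ⟩)).symm⟩
  have hM := isSemimagic_sum_map_permMat F
  rw [hk] at hM
  obtain ⟨B, hB, hBF⟩ :=
    hM.exists_sum_map_permMat_cons_eq fun i => sum_map_permMat_apply_pos_iff.2 (hτ i)
  have hB' : Multiset.card (τ ::ₘ B) ≤ n - 1 := by rw [Multiset.card_cons, hB]; omega
  exact ⟨S - F + τ ::ₘ B, isMove_tsub_add hFS hBF.symm hF hB', by simp⟩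

theorem exists_isMove_mem_of_eqOn_pair {S : Multiset (Perm (Fin n))} {τ σ : Perm (Fin n)}
    (hS : ∀ i, ∃ ρ ∈ S, ρ i = τ i) (hσ : σ ∈ S) {p q : Fin n} (hpq : p ≠ q)
    (hστ : Set.EqOn σ τ {p, q}) : ∃ S', IsMove n S S' ∧ τ ∈ S' := by
  choose c hcS hc using hS
  let D : Finset (Fin n) := {i | σ i ≠ τ i}
  have hD : #D ≤ n - 2 := by
    have hsub : D ⊆ univ \ {p, q} := fun i hi => by
      simp only [D, mem_filter, mem_univ, true_and] at hi
      simp only [mem_sdiff, mem_univ, mem_insert, mem_singleton, true_and]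
      rintro (rfl | rfl) <;> exact hi (hστ (by simp))
    simpa [card_univ_sdiff, card_pair hpq] using card_le_card hsub
  let F := insert σ (D.image c)
  have hFS : F.val ≤ S := (Multiset.le_iff_subset F.nodup).2 fun ρ hρ => by
    rcases mem_insert.1 (Finset.mem_def.2 hρ) with rfl | hρ
    · exact hσ
    · obtain ⟨i, -, rfl⟩ := mem_image.1 hρ
      exact hcS i
  have hF : #F ≤ n - 1 := by
    have := card_image_le (s := D) (f := c)
    exact (card_insert_le σ (D.image c)).trans (by omega)
  have hτ : ∀ i, ∃ ρ ∈ F, ρ i = τ i := fun i => by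
    by_cases hi : σ i = τ i
    · exact ⟨σ, mem_insert_self _ _, hi⟩
    · exact ⟨c i, mem_insert_of_mem (mem_image_of_mem c (by simpa [D] using hi)), hc i⟩
  exact exists_isMove_mem_of_le hFS hF p.pos hτ

end Moves

theorem Equiv.Perm.SameCycle.mem_of_mapsTo {α : Type*} [Finite α] {f : Perm α} {x y : α}
    (h : f.SameCycle x y) {s : Set α} (hs : Set.MapsTo f s s) (hx : x ∈ s) : y ∈ s := by
  obtain ⟨k, rfl⟩ := h.exists_nat_pow_eq
  exact hs.perm_pow k hx

theorem exists_perm_forall_mem_of_mem_self {α : Type*} [Fintype α] [DecidableEq α]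
    {t : α → Finset α} {z : α} (hdiag : ∀ i ≠ z, i ∈ t i)
    (hopen : ∀ R : Finset α, z ∈ R → ∃ i ∈ R, ¬ t i ⊆ R.erase z) :
    ∃ f : Perm α, ∀ i, f i ∈ t i := by
  have hall : ∀ s : Finset α, #s ≤ #(s.biUnion t) := by
    intro s
    have hsub : s.erase z ⊆ s.biUnion t := fun i hi =>
      mem_biUnion.2 ⟨i, mem_of_mem_erase hi, hdiag i (ne_of_mem_erase hi)⟩
    by_cases hz : z ∈ s
    · obtain ⟨i, hi, hti⟩ := hopen s hz
      obtain ⟨j, hj, hjs⟩ := not_subset.1 hti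
      calc #s = #(insert j (s.erase z)) := by rw [card_insert_of_notMem hjs, card_erase_add_one hz]
        _ ≤ #(s.biUnion t) := card_le_card (insert_subset (mem_biUnion.2 ⟨i, hi, hj⟩) hsub)
    · exact card_le_card (by simpa [erase_eq_of_notMem hz] using hsub)
  obtain ⟨f, hf, hft⟩ := (all_card_le_biUnion_card_iff_exists_injective t).1 hall
  exact ⟨Equiv.ofBijective f hf.bijective_of_finite, hft⟩

section UniqueFixedPoint

variable {α : Type*} (σ : α → Perm α) (hσ : ∀ l x, σ l x = x ↔ x = l)
include hσ

theorem apply_ne_index_of_ne {l x : α} (hx : x ≠ l) : σ l x ≠ l :=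
  fun h => hx ((σ l).injective (h.trans ((hσ l l).2 rfl).symm))

theorem apply_ne_self_of_ne_index {l x : α} (hx : x ≠ l) : σ l x ≠ x :=
  fun h => hx ((hσ l x).1 h)

variable [Fintype α] [DecidableEq α]

theorem exists_perm_eqOn_pair_of_not_sameCycle {z l r : α} (hlz : l ≠ z)
    (hzr : ¬ (σ l).SameCycle z r) :
    ∃ a : Perm α, a l = l ∧ a r = r ∧ ∀ i, ∃ m ≠ z, σ m i = a i := by
  refine ⟨(σ l).cycleOf z, ?_, Perm.cycleOf_apply_of_not_sameCycle hzr, fun i => ?_⟩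
  · exact Perm.cycleOf_apply_of_not_sameCycle fun h => hlz (h.eq_of_right ((hσ l l).2 rfl)).symm
  by_cases hi : (σ l).SameCycle z i
  · exact ⟨l, hlz, hi.cycleOf_apply.symm⟩
  · refine ⟨i, fun h => hi (h ▸ Perm.SameCycle.rfl), ?_⟩
    rw [(hσ i i).2 rfl, Perm.cycleOf_apply_of_not_sameCycle hi]

theorem exists_perm_eqOn_pair_of_sameCycle {z l m : α} (hlz : l ≠ z) (hmz : m ≠ z)
    (hwl : σ m z ≠ l) (hw : σ m z ≠ σ l z) (hcyc : (σ l).SameCycle (σ m z) z) :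
    ∃ a : Perm α, a l = l ∧ a (σ l z) = σ l z ∧ ∀ i, ∃ m ≠ z, σ m i = a i := by
  set q := σ l z
  have hqz : q ≠ z := apply_ne_self_of_ne_index σ hσ hlz.symm
  let t : α → Finset α := fun i =>
    if i = l ∨ i = q then {i} else ((univ.erase z).image (σ · i)) \ {l, q}
  have ht : ∀ i, ¬ (i = l ∨ i = q) → ∀ m ≠ z, σ m i ≠ l → σ m i ≠ q →
      σ m i ∈ t i := by
    intro i hi m hm h1 h2
    simp only [t, if_neg hi, mem_sdiff, mem_image, mem_erase, mem_insert, mem_singleton]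
    exact ⟨⟨m, ⟨hm, mem_univ m⟩, rfl⟩, by tauto⟩
  have hdiag : ∀ i ≠ z, i ∈ t i := by
    intro i hiz
    by_cases hi : i = l ∨ i = q
    · simp [t, hi]
    · have hii : σ i i = i := (hσ i i).2 rfl
      simpa [hii] using ht i hi i hiz (by rw [hii]; tauto) (by rw [hii]; tauto)
  have hopen : ∀ R : Finset α, z ∈ R → ∃ i ∈ R, ¬ t i ⊆ R.erase z := by
    intro R hzR
    by_contra! hclosed
    -- `σ l` would map `R \ {z, l, q}` into itself, yet its cycle through `σ m z` reaches `z`.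
    have hstep : ∀ x ∈ R, x ≠ l → x ≠ q → ∀ m ≠ z, σ m x ≠ l → σ m x ≠ q →
        σ m x ∈ R ∧ σ m x ≠ z := fun x hx hxl hxq m hm h1 h2 => by
      simpa [and_comm] using hclosed x hx (ht x (by tauto) m hm h1 h2)
    let s : Set α := {x | (x ∈ R ∧ x ≠ z) ∧ x ≠ l ∧ x ≠ q}
    have hmaps : Set.MapsTo (σ l) s s := by
      rintro x ⟨⟨hx, hxz⟩, hxl, hxq⟩
      have h1 : σ l x ≠ l := apply_ne_index_of_ne σ hσ hxl
      have h2 : σ l x ≠ q := fun h => hxz ((σ l).injective h)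
      exact ⟨hstep x hx hxl hxq l hlz h1 h2, h1, h2⟩
    have hws : σ m z ∈ s := ⟨hstep z hzR hlz.symm hqz.symm m hmz hwl hw, hwl, hw⟩
    exact (hcyc.mem_of_mapsTo hmaps hws).1.2 rfl
  obtain ⟨f, hf⟩ := exists_perm_forall_mem_of_mem_self hdiag hopen
  have hfix : ∀ i, i = l ∨ i = q → f i = i := fun i hi => by simpa [t, hi] using hf i
  refine ⟨f, hfix l (.inl rfl), hfix q (.inr rfl), fun i => ?_⟩
  by_cases hi : i = l ∨ i = q
  · refine ⟨i, ?_, by rw [hfix i hi, (hσ i i).2 rfl]⟩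
    rcases hi with rfl | rfl
    exacts [hlz, hqz]
  · have := hf i
    simp only [t, if_neg hi, mem_sdiff, mem_image, mem_erase, mem_univ, and_true] at this
    obtain ⟨⟨m, hm, h⟩, -⟩ := this
    exact ⟨m, hm, h⟩

theorem exists_apply_ne_of_four_le_card (hcard : 4 ≤ Fintype.card α) (z : α) :
    ∃ l ≠ z, ∃ m ≠ z, σ m z ≠ l ∧ σ m z ≠ σ l z := by
  by_contra! h
  have : Nontrivial α := Fintype.one_lt_card_iff_nontrivial.1 (by omega)
  obtain ⟨l, hlz⟩ := exists_ne z
  set u := σ l z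
  have huz : u ≠ z := apply_ne_self_of_ne_index σ hσ hlz.symm
  have hul : u ≠ l := apply_ne_index_of_ne σ hσ hlz.symm
  have hσu : σ u z = l := by
    by_contra h'
    exact apply_ne_index_of_ne σ hσ huz.symm (h l hlz u huz h')
  obtain ⟨c, -, hc⟩ := exists_mem_notMem_of_card_lt_card (s := {z, l, u}) (t := univ)
    (by rw [card_univ]; exact (card_le_three).trans_lt (by omega))
  simp only [mem_insert, mem_singleton, not_or] at hc
  obtain ⟨hcz, hcl, hcu⟩ := hc
  have h1 := h c hcz u huz (by rw [hσu]; exact Ne.symm hcl)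
  have h2 := h c hcz l hlz (Ne.symm hcu)
  exact hul (h2.trans (h1.symm.trans hσu))

theorem exists_perm_eqOn_pair (hcard : 4 ≤ Fintype.card α) (z : α) :
    ∃ a : Perm α, ∃ p q, p ≠ q ∧ a p = p ∧ a q = q ∧
      ∀ i, ∃ m ≠ z, σ m i = a i := by
  by_cases h : ∃ l ≠ z, ∃ r ≠ l, ¬ (σ l).SameCycle z r
  · obtain ⟨l, hlz, r, hrl, hzr⟩ := h
    obtain ⟨a, hl, hr, ha⟩ := exists_perm_eqOn_pair_of_not_sameCycle σ hσ hlz hzr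
    exact ⟨a, l, r, hrl.symm, hl, hr, ha⟩
  · push Not at h
    obtain ⟨l, hlz, m, hmz, hwl, hw⟩ := exists_apply_ne_of_four_le_card σ hσ hcard z
    obtain ⟨a, hl, hq, ha⟩ :=
      exists_perm_eqOn_pair_of_sameCycle σ hσ hlz hmz hwl hw (h l hlz _ hwl).symm
    exact ⟨a, l, σ l z, (apply_ne_index_of_ne σ hσ hlz.symm).symm, hl, hq, ha⟩

end UniqueFixedPoint

theorem Relation.ReflTransGen.exists_seq {β : Type*} {r : β → β → Prop} {a b : β}
    (h : ReflTransGen r a b) :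
    ∃ (m : ℕ) (L : ℕ → β), L 0 = a ∧ L m = b ∧ ∀ i < m, r (L i) (L (i + 1)) := by
  induction h using Relation.ReflTransGen.head_induction_on with
  | refl => exact ⟨0, fun _ => b, rfl, rfl, by simp⟩
  | @head a c hac _ ih =>
    obtain ⟨m, L, hL0, hLm, hL⟩ := ih
    refine ⟨m + 1, fun | 0 => a | i + 1 => L i, rfl, hLm, ?_⟩
    rintro (_ | i) hi
    · simpa [hL0] using hac
    · exact hL i (by omega)

section Connect

variable {n : ℕ}

theorem exists_reflTransGen_isMove_mem (hn : 4 ≤ n) {S : Multiset (Perm (Fin n))}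
    {τ : Perm (Fin n)} (hS : ∀ i, ∃ σ ∈ S, σ i = τ i) :
    ∃ S', ReflTransGen (IsMove n) S S' ∧ τ ∈ S' := by
  by_cases h : ∃ σ ∈ S, ∃ p q, p ≠ q ∧ Set.EqOn σ τ {p, q}
  · obtain ⟨σ, hσ, p, q, hpq, hστ⟩ := h
    obtain ⟨S', hSS', hτ⟩ := exists_isMove_mem_of_eqOn_pair hS hσ hpq hστ
    exact ⟨S', .single hSS', hτ⟩
  push Not at h
  choose c hcS hc using hS
  have hfix : ∀ l x, (τ⁻¹ * c l) x = x ↔ x = l := by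
    intro l x
    rw [Perm.mul_apply, Perm.inv_eq_iff_eq]
    refine ⟨fun hx => ?_, by rintro rfl; exact hc x⟩
    by_contra hxl
    exact h (c l) (hcS l) x l hxl (by simp [Set.EqOn, hx.symm, hc l])
  let z : Fin n := ⟨0, by omega⟩
  obtain ⟨a, p, q, hpq, hp, hq, ha⟩ := exists_perm_eqOn_pair _ hfix (by simpa using hn) z
  let F := (univ.erase z).image c
  have hFS : F.val ≤ S := (Multiset.le_iff_subset F.nodup).2 fun ρ hρ => by
    obtain ⟨l, -, rfl⟩ := mem_image.1 (Finset.mem_def.2 hρ)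
    exact hcS l
  have hF : #F ≤ n - 1 := card_image_le.trans (by simp)
  have hτa : ∀ i, ∃ σ ∈ F, σ i = (τ * a) i := fun i => by
    obtain ⟨l, hl, hli⟩ := ha i
    exact ⟨c l, mem_image_of_mem c (by simpa using hl), by simp [← hli]⟩
  obtain ⟨S₁, hSS₁, haS₁⟩ := exists_isMove_mem_of_le hFS hF (by omega) hτa
  have hS₁ : ∀ i, ∃ σ ∈ S₁, σ i = τ i := fun i => sum_map_permMat_apply_pos_iff.1 <| by
    rw [← hSS₁.1]; exact sum_map_permMat_apply_pos_iff.2 ⟨c i, hcS i, hc i⟩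
  obtain ⟨S₂, hS₁S₂, hτ⟩ :=
    exists_isMove_mem_of_eqOn_pair hS₁ haS₁ hpq (by simp [Set.EqOn, hp, hq])
  exact ⟨S₂, .head hSS₁ (.single hS₁S₂), hτ⟩

theorem reflTransGen_isMove_of_sum_eq (hn : 4 ≤ n) {S T : Multiset (Perm (Fin n))}
    (h : (S.map (permMat n)).sum = (T.map (permMat n)).sum) : ReflTransGen (IsMove n) S T := by
  induction T using Multiset.induction_on generalizing S with
  | empty =>
    obtain rfl : S = 0 := Multiset.eq_zero_of_forall_notMem fun σ hσ => by
      simpa [h] using (sum_map_permMat_apply_pos_iff (i := ⟨0, by omega⟩)).2 ⟨σ, hσ, rfl⟩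
    rfl
  | cons τ T ih =>
    obtain ⟨S', hSS', hτ⟩ := exists_reflTransGen_isMove_mem hn (S := S) (τ := τ) fun i =>
      sum_map_permMat_apply_pos_iff.1 (by rw [h]; simp [permMat])
    have hsum := (sum_map_permMat_eq_of_reflTransGen hSS').symm.trans h
    rw [← Multiset.cons_erase hτ] at hsum hSS'
    simp only [Multiset.map_cons, Multiset.sum_cons, add_right_inj] at hsum
    exact hSS'.trans ((ih hsum).lift _ fun _ _ hm => by simpa using hm.add_left {τ})

end Connect

theorem multisets_connected_by_moves_of_degree_le_sub_one_general
    (n : ℕ) (hn : 3 < n) (S T : Multiset (Equiv.Perm (Fin n)))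
    (hsum : (S.map (permMat n)).sum = (T.map (permMat n)).sum) :
    ∃ (m : ℕ) (L : ℕ → Multiset (Equiv.Perm (Fin n))),
      L 0 = S ∧ L m = T ∧
      (∀ i ≤ m, ((L i).map (permMat n)).sum = (S.map (permMat n)).sum) ∧
      (∀ i < m, Multiset.card (L i - L (i + 1)) ≤ n - 1 ∧
        Multiset.card (L (i + 1) - L i) ≤ n - 1) := by
  obtain ⟨m, L, hL0, hLm, hL⟩ := (reflTransGen_isMove_of_sum_eq hn hsum).exists_seq
  refine ⟨m, L, hL0, hLm, fun i hi => ?_, fun i hi => (hL i hi).2⟩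
  induction i with
  | zero => rw [hL0]
  | succ i ih => rw [← (hL i hi).1, ih (by omega)]

/-- For `n > 3`, any two multisets of permutations of `{1, …, n}` with the same sum of
permutation matrices are connected by a sequence of multisets, all with that same sum of
permutation matrices, in which consecutive multisets differ (in each direction, counted
with multiplicity) in at most `n - 1` elements. -/
theorem multisets_connected_by_moves_of_degree_le_sub_one
    (n : ℕ) (hn : 3 < n) (S T : Multiset (Equiv.Perm (Fin n)))
    (hcard : Multiset.card S = Multiset.card T)
    (hsum : (S.map (permMat n)).sum = (T.map (permMat n)).sum) :
    ∃ (m : ℕ) (L : ℕ → Multiset (Equiv.Perm (Fin n))),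
      L 0 = S ∧ L m = T ∧
      (∀ i ≤ m, ((L i).map (permMat n)).sum = (S.map (permMat n)).sum) ∧
      (∀ i < m, Multiset.card (L i - L (i + 1)) ≤ n - 1 ∧
        Multiset.card (L (i + 1) - L i) ≤ n - 1) :=
  multisets_connected_by_moves_of_degree_le_sub_one_general n hn S T hsum
end

section
/- Let π_1,…,π_n and σ_1,…,σ_n be permutations of {1,…,n} such that Σ_{i=1}^n P_{π_i} = Σ_{j=1}^n P_{σ_j} = b, and suppose b is not the all-ones matrix. Then there exist indices i and j such that π_i and σ_j agree in at least 2 positions, i.e., #{k : π_i(k) = σ_j(k)} ≥ 2. -/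
/-- If two families of `n` permutations have the same sum `b` of permutation matrices, and
`b` is not the all-ones matrix, then some permutation of the first family agrees with some
permutation of the second family in at least 2 positions. -/
theorem exists_pair_agreeing_in_two_positions
    (n : ℕ) (π σ : Fin n → Equiv.Perm (Fin n)) (b : Matrix (Fin n) (Fin n) ℕ)
    (hπ : ∑ i, permMat n (π i) = b) (hσ : ∑ j, permMat n (σ j) = b)
    (hb : b ≠ Matrix.of fun _ _ => 1) :
    ∃ i j, 2 ≤ (Finset.univ.filter fun k => π i k = σ j k).card := by
  by_contra hcon
  push_neg at hcon
  have hbπ : ∀ k m, b k m = (Finset.univ.filter fun i => π i k = m).card := by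
    intro k m
    rw [← hπ, Matrix.sum_apply, Finset.card_filter]
    simp [permMat]
  have hbσ : ∀ k m, b k m = (Finset.univ.filter fun j => σ j k = m).card := by
    intro k m
    rw [← hσ, Matrix.sum_apply, Finset.card_filter]
    simp [permMat]
  have hrow : ∀ k : Fin n, ∑ m, b k m = n := by
    intro k
    simp only [hbπ, Finset.card_filter]
    rw [Finset.sum_comm]
    simp
  -- key identity
  have key : ∑ i, ∑ j, (Finset.univ.filter fun k => π i k = σ j k).card
      = ∑ k, ∑ m, b k m * b k m := by
    simp only [Finset.card_filter]
    have swap : ∑ i, ∑ j, ∑ k, (if π i k = σ j k then 1 else 0)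
        = ∑ k : Fin n, ∑ i, ∑ j, (if π i k = σ j k then (1:ℕ) else 0) :=
      (Finset.sum_congr rfl fun i _ => Finset.sum_comm).trans Finset.sum_comm
    rw [swap]
    refine Finset.sum_congr rfl fun k _ => ?_
    have step1 : ∀ i, ∑ j, (if π i k = σ j k then (1:ℕ) else 0) = b k (π i k) := by
      intro i
      rw [hbσ k (π i k), Finset.card_filter]
      refine Finset.sum_congr rfl fun j _ => ?_
      simp [eq_comm]
    simp only [step1]
    have step2 : ∀ i, b k (π i k) = ∑ m, if π i k = m then b k m else 0 := by
      intro i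
      rw [Finset.sum_ite_eq]
      simp
    simp only [step2]
    rw [Finset.sum_comm]
    refine Finset.sum_congr rfl fun m _ => ?_
    have : ∀ i, (if π i k = m then b k m else 0) = (if π i k = m then 1 else 0) * b k m := by
      intro i; split <;> simp
    simp only [this]
    rw [← Finset.sum_mul, ← Finset.card_filter, ← hbπ]
  -- there is an entry ≥ 2
  have hbig : ∃ k m, 2 ≤ b k m := by
    by_contra hno
    push_neg at hno
    apply hb
    have hall : ∀ k m, b k m = 1 := by
      intro k m
      by_contra hne
      have h0 : b k m = 0 := by have := hno k m; omega
      have hlt : ∑ m', b k m' < ∑ _m' : Fin n, 1 :=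
        Finset.sum_lt_sum (fun m' _ => by have := hno k m'; omega)
          ⟨m, Finset.mem_univ m, by omega⟩
      rw [hrow k] at hlt
      simp at hlt
    funext k m
    simp [hall]
  obtain ⟨k₀, m₀, hk₀⟩ := hbig
  have h1 : ∑ i, ∑ j, (Finset.univ.filter fun k => π i k = σ j k).card ≤ n * n := by
    calc ∑ i, ∑ j, (Finset.univ.filter fun k => π i k = σ j k).card
        ≤ ∑ _i : Fin n, ∑ _j : Fin n, 1 :=
          Finset.sum_le_sum fun i _ => Finset.sum_le_sum fun j _ => by
            have := hcon i j; omega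
      _ = n * n := by simp [Nat.mul_comm]
  have h2 : n * n < ∑ k, ∑ m, b k m * b k m := by
    have hnn : n * n = ∑ k : Fin n, ∑ m, b k m := by
      simp [hrow, Nat.mul_comm]
    rw [hnn]
    have hsq : ∀ a : ℕ, a ≤ a * a := fun a => by nlinarith
    refine Finset.sum_lt_sum (fun k _ => Finset.sum_le_sum fun m _ => hsq _)
      ⟨k₀, Finset.mem_univ k₀,
        Finset.sum_lt_sum (fun m _ => hsq _) ⟨m₀, Finset.mem_univ m₀, by nlinarith⟩⟩
  omega
end

section
/- Let n ≥ 2 and let λ and ν be permutations of {1,…,n}. There exists a multiset of n permutations of {1,…,n}, containing both λ and ν, whose permutation matrices sum to the all-ones matrix J, if and only if λ(i) ≠ ν(i) for every i ∈ {1,…,n}. In particular, if λ(i) ≠ ν(i) for all i, then there exist permutations π_1,…,π_{n−2} with P_λ + P_ν + Σ_{i=1}^{n−2} P_{π_i} = J. -/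
open Finset Function

theorem exists_injective_of_le_card_filter_of_card_filter_le
    {α β : Type*} [Fintype α] [Fintype β] (r : α → β → Prop) [DecidableRel r] {d : ℕ}
    (hd : 0 < d) (hα : ∀ a, d ≤ #{b | r a b}) (hβ : ∀ b, #{a | r a b} ≤ d) :
    ∃ f : α → β, Injective f ∧ ∀ a, r a (f a) := by
  -- Double count the edges between `A` and its neighbourhood.
  refine (Fintype.all_card_le_filter_rel_iff_exists_injective r).1 fun A => ?_
  refine Nat.le_of_mul_le_mul_right (card_mul_le_card_mul r (m := d) (n := d) ?_ ?_) hd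
  · intro a ha
    refine (hα a).trans (card_le_card fun b hb => ?_)
    simp only [mem_filter, mem_univ, true_and] at hb
    simp only [bipartiteAbove, mem_filter, mem_univ, true_and]
    exact ⟨⟨a, ha, hb⟩, hb⟩
  · intro b _
    exact (card_le_card (filter_subset_filter _ (subset_univ A))).trans (hβ b)

section Perm

variable {α : Type*}

/-- A Latin rectangle, encoded by its set of rows. -/
def IsLatinRectangle (S : Finset (Equiv.Perm α)) : Prop :=
  (S : Set (Equiv.Perm α)).Pairwise fun ρ σ => ∀ a, ρ a ≠ σ a

theorem IsLatinRectangle.injOn_eval {S : Finset (Equiv.Perm α)} (hS : IsLatinRectangle S)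
    (a : α) : Set.InjOn (fun σ : Equiv.Perm α => σ a) S :=
  fun _ hσ _ hτ h => by_contra fun hne => hS hσ hτ hne a h

variable [Fintype α] [DecidableEq α]

theorem IsLatinRectangle.exists_perm_forall_ne {S : Finset (Equiv.Perm α)}
    (hS : IsLatinRectangle S) (hcard : #S < Fintype.card α) :
    ∃ ρ : Equiv.Perm α, ∀ σ ∈ S, ∀ a, ρ a ≠ σ a := by
  have hα : ∀ a, #{b | ∀ σ ∈ S, σ a ≠ b} = Fintype.card α - #S := by
    intro a
    have : (univ.filter fun b => ∀ σ ∈ S, σ a ≠ b) = univ \ S.image fun σ => σ a := by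
      ext b; simp
    rw [this, card_univ_sdiff, card_image_of_injOn (hS.injOn_eval a)]
  have hβ : ∀ b, #{a | ∀ σ ∈ S, σ a ≠ b} = Fintype.card α - #S := by
    intro b
    have : (univ.filter fun a => ∀ σ ∈ S, σ a ≠ b) = univ \ S.image fun σ => σ⁻¹ b := by
      ext a; simp [Equiv.eq_symm_apply, eq_comm]
    rw [this, card_univ_sdiff, card_image_of_injOn fun σ hσ τ hτ h =>
      by_contra fun hne => hS hσ hτ hne (σ⁻¹ b)
        (by nth_rewrite 2 [h]; simp)]
  obtain ⟨f, hf, hfS⟩ := exists_injective_of_le_card_filter_of_card_filter_le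
    (fun a b => ∀ σ ∈ S, σ a ≠ b) (Nat.sub_pos_of_lt hcard) (fun a => (hα a).ge)
    (fun b => (hβ b).le)
  exact ⟨Equiv.ofBijective f (Finite.injective_iff_bijective.1 hf),
    fun σ hσ a h => hfS a σ hσ h.symm⟩

theorem IsLatinRectangle.exists_superset_card_eq {S : Finset (Equiv.Perm α)}
    (hS : IsLatinRectangle S) (hcard : #S ≤ Fintype.card α) :
    ∃ T, S ⊆ T ∧ IsLatinRectangle T ∧ #T = Fintype.card α := by
  induction h : Fintype.card α - #S generalizing S with
  | zero => exact ⟨S, subset_rfl, hS, by omega⟩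
  | succ k ih =>
    obtain ⟨ρ, hρ⟩ := hS.exists_perm_forall_ne (by omega)
    have ⟨a⟩ : Nonempty α := Fintype.card_pos_iff.1 (by omega)
    have hρS : ρ ∉ S := fun hmem => hρ ρ hmem a rfl
    obtain ⟨T, hST, hT, hTcard⟩ := ih (S := insert ρ S)
      (by
        rw [IsLatinRectangle, coe_insert]
        exact hS.insert fun σ hσ _ => ⟨hρ σ hσ, fun a => (hρ σ hσ a).symm⟩)
      (by rw [card_insert_of_notMem hρS]; omega) (by rw [card_insert_of_notMem hρS]; omega)
    exact ⟨T, (subset_insert ρ S).trans hST, hT, hTcard⟩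

end Perm

theorem IsLatinRectangle.sum_permMat_eq_one {n : ℕ} {S : Finset (Equiv.Perm (Fin n))}
    (hS : IsLatinRectangle S) (hcard : #S = n) :
    ∑ ρ ∈ S, permMat n ρ = Matrix.of fun _ _ => 1 := by
  ext i j
  have hinj := hS.injOn_eval i
  have himage : S.image (fun σ => σ i) = univ :=
    eq_univ_of_card _ (by rw [card_image_of_injOn hinj, hcard, Fintype.card_fin])
  simp only [Matrix.sum_apply, permMat, Matrix.of_apply]
  rw [← sum_image (f := fun k => if k = j then 1 else 0) hinj, himage, sum_ite_eq']
  simp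

theorem apply_ne_of_permMat_add_permMat_add_eq_one {n : ℕ} {lam nu : Equiv.Perm (Fin n)}
    {X : Matrix (Fin n) (Fin n) ℕ}
    (h : permMat n lam + permMat n nu + X = Matrix.of fun _ _ => 1) (i : Fin n) :
    lam i ≠ nu i := by
  intro hi
  have := congrFun (congrFun h i) (lam i)
  simp [permMat, ← hi] at this
  omega

theorem exists_finset_sum_permMat_eq_one {n : ℕ} (hn : 2 ≤ n) {lam nu : Equiv.Perm (Fin n)}
    (hd : ∀ i, lam i ≠ nu i) :
    ∃ S : Finset (Equiv.Perm (Fin n)), lam ∈ S ∧ nu ∈ S ∧ #S = n ∧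
      ∑ ρ ∈ S, permMat n ρ = Matrix.of fun _ _ => 1 := by
  have hS : IsLatinRectangle {lam, nu} := by
    rw [IsLatinRectangle, coe_pair]
    exact Set.pairwise_pair.2 fun _ => ⟨hd, fun i => (hd i).symm⟩
  obtain ⟨T, hsub, hT, hcard⟩ := hS.exists_superset_card_eq
    ((card_le_two).trans (by simpa using hn))
  rw [Fintype.card_fin] at hcard
  exact ⟨T, hsub (by simp), hsub (by simp), hcard, hT.sum_permMat_eq_one hcard⟩

/-- For `n ≥ 2` and permutations `λ`, `ν` of `{1, …, n}`: there is a multiset of `n`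
permutations containing both `λ` and `ν` whose permutation matrices sum to the all-ones
matrix iff `λ` and `ν` disagree in every position.  In particular, if they disagree
everywhere, then `P_λ + P_ν` can be completed to the all-ones matrix by `n - 2` further
permutation matrices. -/
theorem mem_common_decomposition_iff_derangement
    (n : ℕ) (hn : 2 ≤ n) (lam nu : Equiv.Perm (Fin n)) :
    ((∃ M : Multiset (Equiv.Perm (Fin n)),
        Multiset.card M = n ∧ ({lam, nu} : Multiset (Equiv.Perm (Fin n))) ≤ M ∧
        (M.map (permMat n)).sum = Matrix.of fun _ _ => 1) ↔
      ∀ i, lam i ≠ nu i) ∧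
    ((∀ i, lam i ≠ nu i) →
      ∃ π : Fin (n - 2) → Equiv.Perm (Fin n),
        permMat n lam + permMat n nu + ∑ i, permMat n (π i)
          = Matrix.of fun _ _ => 1) := by
  refine ⟨⟨?_, fun hd => ?_⟩, fun hd => ?_⟩
  · rintro ⟨M, -, hle, hsum⟩
    obtain ⟨M', rfl⟩ := Multiset.le_iff_exists_add.1 hle
    exact apply_ne_of_permMat_add_permMat_add_eq_one (X := (M'.map (permMat n)).sum)
      (by simpa [add_assoc] using hsum)
  · obtain ⟨S, hlam, hnu, hcard, hsum⟩ := exists_finset_sum_permMat_eq_one hn hd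
    have hne : lam ≠ nu := fun h => hd ⟨0, by omega⟩ (by rw [h])
    refine ⟨S.val, hcard, (Multiset.le_iff_subset (by simp [hne])).2 ?_, hsum⟩
    simp [Multiset.insert_eq_cons, Multiset.cons_subset, hlam, hnu]
  · obtain ⟨S, hlam, hnu, hcard, hsum⟩ := exists_finset_sum_permMat_eq_one hn hd
    have hne : nu ≠ lam := fun h => hd ⟨0, by omega⟩ (by rw [h])
    set T := (S.erase lam).erase nu
    have hT : #T = n - 2 := by
      rw [card_erase_of_mem (mem_erase.2 ⟨hne, hnu⟩), card_erase_of_mem hlam, hcard]; rfl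
    refine ⟨fun i => (T.equivFinOfCardEq hT).symm i, ?_⟩
    rw [Equiv.sum_comp (T.equivFinOfCardEq hT).symm (fun ρ => permMat n ρ), sum_coe_sort,
      add_assoc, add_sum_erase _ _ (mem_erase.2 ⟨hne, hnu⟩), add_sum_erase _ _ hlam, hsum]
end

section
/- Let n > 3. For every permutation π of {1,…,n} and every transposition τ, the permutations π and π∘τ lie in the same connected component of the graph G_n. -/
/-- The graph `G_n` on permutations of `{1, …, n}`, with an edge between `λ` and `ν`
iff `λ i ≠ ν i` for every `i`. -/
def derangementGraph (n : ℕ) : SimpleGraph (Equiv.Perm (Fin n)) where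
  Adj lam nu := lam ≠ nu ∧ ∀ i, lam i ≠ nu i
  symm := ⟨fun _ _ h => ⟨h.1.symm, fun i => (h.2 i).symm⟩⟩
  loopless := ⟨fun _ h => h.1 rfl⟩

/-!
Identify `{1, …, n}` with `ℤ/n`. A rotation `i ↦ i + k` disagrees everywhere with the identity
as soon as `k ≠ 0`, and everywhere with the transposition `(a b)` as soon as moreover
`k ≠ b - a` and `k ≠ a - b`; for `n > 3` such a `k` exists. Since left multiplication by `π`
is a graph automorphism, `π — π ∘ (i ↦ i + k) — π ∘ (a b)` is a path in `G_n`.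
-/

open Equiv

theorem Fintype.exists_ne_ne_ne {α : Type*} [Fintype α] [DecidableEq α]
    (hα : 3 < Fintype.card α) (x y z : α) : ∃ k, k ≠ x ∧ k ≠ y ∧ k ≠ z := by
  obtain ⟨k, -, hk⟩ := Finset.exists_mem_notMem_of_card_lt_card
    (s := {x, y, z}) (t := Finset.univ) (Finset.card_le_three.trans_lt hα)
  simp only [Finset.mem_insert, Finset.mem_singleton, not_or] at hk
  exact ⟨k, hk⟩

theorem Equiv.add_ne_swap_apply {G : Type*} [AddCommGroup G] [DecidableEq G] {a b k : G}
    (hk : k ≠ 0) (hab : k ≠ b - a) (hba : k ≠ a - b) (i : G) : i + k ≠ swap a b i := by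
  rcases eq_or_ne i a with rfl | hia
  · rw [swap_apply_left]
    exact fun h => hab (eq_sub_of_add_eq' h)
  rcases eq_or_ne i b with rfl | hib
  · rw [swap_apply_right]
    exact fun h => hba (eq_sub_of_add_eq' h)
  · rw [swap_apply_of_ne_of_ne hia hib]
    simpa using hk

namespace derangementGraph

variable {n : ℕ}

theorem adj_iff [NeZero n] {σ ρ : Perm (Fin n)} :
    (derangementGraph n).Adj σ ρ ↔ ∀ i, σ i ≠ ρ i :=
  ⟨And.right, fun h => ⟨fun hσρ => h 0 (hσρ ▸ rfl), h⟩⟩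

theorem adj_mul_left {π σ ρ : Perm (Fin n)} :
    (derangementGraph n).Adj (π * σ) (π * ρ) ↔ (derangementGraph n).Adj σ ρ := by
  simp only [derangementGraph, ne_eq, mul_right_inj, Perm.mul_apply, EmbeddingLike.apply_eq_iff_eq]

theorem adj_mul_addRight [NeZero n] (π : Perm (Fin n)) {k : Fin n} (hk : k ≠ 0) :
    (derangementGraph n).Adj π (π * Equiv.addRight k) := by
  simpa using (adj_mul_left (π := π) (σ := 1)).2 (adj_iff.2 fun i => by simpa using hk)

end derangementGraph

/-- For `n > 3`, a permutation `π` and its composition with any transposition `τ` lie in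
the same connected component of the graph `G_n`. -/
theorem reachable_mul_swap (n : ℕ) (hn : 3 < n)
    (π τ : Equiv.Perm (Fin n)) (hτ : τ.IsSwap) :
    (derangementGraph n).Reachable π (π * τ) := by
  have : NeZero n := ⟨by omega⟩
  obtain ⟨a, b, -, rfl⟩ := hτ
  obtain ⟨k, hk, hab, hba⟩ := Fintype.exists_ne_ne_ne (by simpa using hn) 0 (b - a) (a - b)
  have hrot_swap : (derangementGraph n).Adj (π * Equiv.addRight k) (π * swap a b) :=
    derangementGraph.adj_mul_left.2 <|
      derangementGraph.adj_iff.2 (add_ne_swap_apply hk hab hba)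
  exact (derangementGraph.adj_mul_addRight π hk).reachable.trans hrot_swap.reachable
end

section
/- For every integer n > 3, the graph G_n is connected. -/
open Equiv

namespace SimpleGraph

variable {G : Type*} [Group G] {s : Set G}

theorem Reachable.mul_left_mulCayley {x y : G} (h : (mulCayley s).Reachable x y) (g : G) :
    (mulCayley s).Reachable (g * x) (g * y) :=
  h.map ⟨(g * ·), mulCayley_adj_mul_iff_right.mpr⟩

theorem connected_mulCayley (hs : Subgroup.closure s = ⊤) : (mulCayley s).Connected := by
  let H : Subgroup G :=
    { carrier := {g | (mulCayley s).Reachable 1 g}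
      one_mem' := Reachable.refl 1
      mul_mem' := fun {a b} ha hb => ha.trans (by simpa using hb.mul_left_mulCayley a)
      inv_mem' := fun {a} ha => by simpa using (ha.mul_left_mulCayley a⁻¹).symm }
  have hH : H = ⊤ := by
    refine top_le_iff.mp (hs ▸ (Subgroup.closure_le H).mpr fun g hg => ?_)
    by_cases h1 : g = 1
    · exact h1 ▸ Reachable.refl 1
    · exact Adj.reachable ((mulCayley_adj s 1 g).mpr ⟨Ne.symm h1, Or.inl (by simpa using hg)⟩)
  refine ⟨fun x y => ?_⟩
  have hxy : x⁻¹ * y ∈ H := hH ▸ Subgroup.mem_top _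
  simpa using hxy.mul_left_mulCayley x

end SimpleGraph

theorem inv_mul_mem_derangements_iff {α : Type*} {u v : Perm α} :
    u⁻¹ * v ∈ derangements α ↔ ∀ x, u x ≠ v x :=
  forall_congr' fun _ => (not_congr Perm.inv_eq_iff_eq).trans ne_comm

theorem derangementGraph_eq_mulCayley (n : ℕ) :
    derangementGraph n = SimpleGraph.mulCayley (derangements (Fin n)) := by
  ext u v
  simp only [SimpleGraph.mulCayley_adj, inv_mul_mem_derangements_iff, ne_comm (a := v _), or_self]
  rfl

theorem addRight_mem_derangements {A : Type*} [AddGroup A] {c : A} (hc : c ≠ 0) :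
    Equiv.addRight c ∈ derangements A := fun i => by simpa using hc

theorem swap_mul_addRight_mem_derangements {A : Type*} [AddGroup A] [DecidableEq A] {a b c : A}
    (hc : c ≠ 0) (ha : b + c ≠ a) (hb : a + c ≠ b) :
    swap a b * Equiv.addRight c ∈ derangements A := by
  intro i
  simp only [Perm.mul_apply, coe_addRight]
  rcases eq_or_ne (i + c) a with rfl | hia
  · rw [swap_apply_left]
    rintro rfl
    exact ha rfl
  rcases eq_or_ne (i + c) b with rfl | hib
  · rw [swap_apply_right]
    rintro rfl
    exact hb rfl
  rw [swap_apply_of_ne_of_ne hia hib]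
  simpa using hc

theorem closure_derangements_eq_top {n : ℕ} (hn : 3 < n) :
    Subgroup.closure (derangements (Fin n)) = ⊤ := by
  have : NeZero n := ⟨by omega⟩
  refine top_le_iff.mp (Perm.closure_isSwap (α := Fin n) ▸ (Subgroup.closure_le _).mpr ?_)
  rintro _ ⟨a, b, -, rfl⟩
  obtain ⟨c, -, hc⟩ := Finset.exists_mem_notMem_of_card_lt_card (s := {0, a - b, b - a})
    (t := Finset.univ) (Finset.card_le_three.trans_lt (by simpa using hn))
  simp only [Finset.mem_insert, Finset.mem_singleton, not_or] at hc
  obtain ⟨hc0, hca, hcb⟩ := hc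
  have hτ := swap_mul_addRight_mem_derangements hc0 (mt eq_sub_of_add_eq' hca)
    (mt eq_sub_of_add_eq' hcb)
  rw [← mul_inv_cancel_right (swap a b) (Equiv.addRight c)]
  exact Subgroup.mul_mem _ (Subgroup.subset_closure hτ)
    (Subgroup.inv_mem _ (Subgroup.subset_closure (addRight_mem_derangements hc0)))

/-- For every `n > 3`, the graph `G_n` is connected. -/
theorem derangementGraph_connected (n : ℕ) (hn : 3 < n) :
    (derangementGraph n).Connected := by
  rw [derangementGraph_eq_mulCayley]
  exact SimpleGraph.connected_mulCayley (closure_derangements_eq_top hn)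
end

section
/- Let n > 3. Consider the set of all decompositions of the all-ones matrix J into n permutation matrices, i.e., sets {π_1,…,π_n} of n permutations of {1,…,n} with Σ_{i=1}^n P_{π_i} = J. Form the graph on these decompositions in which two decompositions are adjacent if and only if they have at least one permutation in common. This graph is connected. -/
/-- Decompositions of the all-ones `n × n` matrix into `n` permutation matrices,
viewed as sets of `n` permutations. -/
def Decomposition (n : ℕ) : Type :=
  {D : Finset (Equiv.Perm (Fin n)) //
    D.card = n ∧ ∑ π ∈ D, permMat n π = Matrix.of fun _ _ => 1}

/-- The graph on decompositions of the all-ones matrix into `n` permutation matrices,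
with two decompositions adjacent iff they share at least one permutation. -/
def decompositionGraph (n : ℕ) : SimpleGraph (Decomposition n) where
  Adj D E := D ≠ E ∧ (D.1 ∩ E.1).Nonempty
  symm := ⟨fun _ _ h => ⟨h.1.symm, by rw [Finset.inter_comm]; exact h.2⟩⟩
  loopless := ⟨fun _ h => h.1 rfl⟩

/-!
Every decomposition contains some `σ`, so it meets the decomposition `{i ↦ σ i + c | c : Fin n}`
(a "coset" of `σ`). Two permutations that disagree at every point extend to a full decomposition
(Hall/König), so the cosets of `σ` and `τ` are joined by a path of length two as soon as
`i ↦ τ i - σ i` misses a value. If `i ↦ i - σ i` is a bijection, the coset of `σ` is joined to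
that of the identity through the coset of a transposition, which fixes two further points when
`n ≥ 4`.
-/

open Finset Equiv

namespace Equiv.Perm

variable {ι : Type*} [DecidableEq ι]

@[simp]
lemma permMatrix_apply (σ : Perm ι) (i j : ι) :
    σ.permMatrix ℕ i j = if σ i = j then 1 else 0 := by
  simp [PEquiv.toMatrix_apply]

lemma one_le_sum_permMatrix_apply {S : Finset (Perm ι)} {σ : Perm ι} (hσ : σ ∈ S) (i : ι) :
    1 ≤ (∑ τ ∈ S, τ.permMatrix ℕ) i (σ i) := by
  rw [Matrix.sum_apply]
  exact (single_le_sum (f := fun τ : Perm ι => τ.permMatrix ℕ i (σ i))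
    (fun _ _ => Nat.zero_le _) hσ).trans' (by simp)

variable [Fintype ι]

lemma sum_permMatrix_row (σ : Perm ι) (i : ι) : ∑ j, σ.permMatrix ℕ i j = 1 := by
  simp

lemma sum_permMatrix_col (σ : Perm ι) (j : ι) : ∑ i, σ.permMatrix ℕ i j = 1 := by
  simp [← eq_symm_apply]

lemma sum_sum_permMatrix_row (S : Finset (Perm ι)) (i : ι) :
    ∑ j, (∑ σ ∈ S, σ.permMatrix ℕ) i j = #S := by
  simp only [Matrix.sum_apply]
  rw [sum_comm]
  simp only [sum_permMatrix_row, sum_const, smul_eq_mul, mul_one]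

lemma sum_sum_permMatrix_col (S : Finset (Perm ι)) (j : ι) :
    ∑ i, (∑ σ ∈ S, σ.permMatrix ℕ) i j = #S := by
  simp only [Matrix.sum_apply]
  rw [sum_comm]
  simp only [sum_permMatrix_col, sum_const, smul_eq_mul, mul_one]

lemma card_eq_of_sum_permMatrix_eq_one [Nonempty ι] {S : Finset (Perm ι)}
    (hS : ∑ σ ∈ S, σ.permMatrix ℕ = Matrix.of fun _ _ => 1) : #S = Fintype.card ι := by
  have := sum_sum_permMatrix_row S (Classical.arbitrary ι)
  simpa [hS] using this.symm

end Equiv.Perm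

namespace Matrix

variable {ι : Type*} [Fintype ι]

/-- Hall's condition: `k` times a set of rows is the mass of `M` on those rows, which is at most
the mass on the columns they meet, `k` times the number of such columns. -/
theorem exists_perm_forall_pos_of_sum_row_col_eq {M : Matrix ι ι ℕ} {k : ℕ} (hk : 0 < k)
    (hrow : ∀ i, ∑ j, M i j = k) (hcol : ∀ j, ∑ i, M i j = k) :
    ∃ σ : Perm ι, ∀ i, 0 < M i (σ i) := by
  suffices ∃ f : ι → ι, Function.Injective f ∧ ∀ i, 0 < M i (f i) by
    obtain ⟨f, hf, hpos⟩ := this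
    exact ⟨Equiv.ofBijective f (Finite.injective_iff_bijective.1 hf), hpos⟩
  refine (@Fintype.all_card_le_filter_rel_iff_exists_injective _ _ _ (fun i j => 0 < M i j)
    (fun _ _ => inferInstance)).1 fun A => ?_
  set B : Finset ι := {j | ∃ i ∈ A, 0 < M i j}
  refine Nat.le_of_mul_le_mul_left ?_ hk
  calc k * #A = ∑ i ∈ A, ∑ j, M i j := by simp [hrow, mul_comm]
    _ = ∑ i ∈ A, ∑ j ∈ B, M i j := by
      refine sum_congr rfl fun i hi => (sum_subset (subset_univ B) fun j _ hj => ?_).symm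
      by_contra h
      exact hj (mem_filter.2 ⟨mem_univ j, i, hi, Nat.pos_of_ne_zero h⟩)
    _ ≤ ∑ i, ∑ j ∈ B, M i j := sum_le_sum_of_subset (subset_univ A)
    _ = k * #B := sum_comm.trans (by simp [hcol, mul_comm])

variable [DecidableEq ι]

/-- König's theorem: peel off the permutation matrix supplied by Hall's theorem. -/
theorem exists_finset_sum_permMatrix_eq [Nonempty ι] {M : Matrix ι ι ℕ} {k : ℕ}
    (hM : ∀ i j, M i j ≤ 1) (hrow : ∀ i, ∑ j, M i j = k) (hcol : ∀ j, ∑ i, M i j = k) :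
    ∃ S : Finset (Perm ι), ∑ σ ∈ S, σ.permMatrix ℕ = M := by
  induction k generalizing M with
  | zero =>
    refine ⟨∅, ?_⟩
    ext i j
    simp_all [sum_eq_zero_iff]
  | succ k ih =>
    obtain ⟨σ, hσ⟩ := exists_perm_forall_pos_of_sum_row_col_eq k.succ_pos hrow hcol
    have hle : ∀ i j, σ.permMatrix ℕ i j ≤ M i j := by
      intro i j
      rw [Perm.permMatrix_apply]
      split_ifs with h
      · exact h ▸ hσ i
      · exact Nat.zero_le _
    obtain ⟨S, hS⟩ := ih (M := M - σ.permMatrix ℕ) (fun i j => (Nat.sub_le _ _).trans (hM i j))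
      (fun i => by simp only [sub_apply, sum_tsub_distrib _ fun j _ => hle i j, hrow,
        Perm.sum_permMatrix_row, Nat.add_sub_cancel])
      (fun j => by simp only [sub_apply, sum_tsub_distrib _ fun i _ => hle i j, hcol,
        Perm.sum_permMatrix_col, Nat.add_sub_cancel])
    have hσS : σ ∉ S := fun hσS => by
      let i := Classical.arbitrary ι
      have h := Perm.one_le_sum_permMatrix_apply hσS i
      rw [hS, sub_apply, Perm.permMatrix_apply, if_pos rfl] at h
      have := hM i (σ i)
      omega
    refine ⟨insert σ S, ?_⟩
    rw [sum_insert hσS, hS]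
    ext i j
    simp only [add_apply, sub_apply]
    have := hle i j
    omega

/-- `J - ∑ T` is a `0/1` matrix with all row and column sums `card ι - #T`. -/
theorem exists_superset_sum_permMatrix_eq_one [Nonempty ι] {T : Finset (Perm ι)}
    (hT : ∀ i j, (∑ σ ∈ T, σ.permMatrix ℕ) i j ≤ 1) :
    ∃ D, T ⊆ D ∧ ∑ σ ∈ D, σ.permMatrix ℕ = of fun _ _ => 1 := by
  set N := ∑ σ ∈ T, σ.permMatrix ℕ
  obtain ⟨S, hS⟩ := exists_finset_sum_permMatrix_eq (M := of fun i j => 1 - N i j)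
    (k := Fintype.card ι - #T) (fun _ _ => Nat.sub_le _ _)
    (fun i => by simp [sum_tsub_distrib _ fun j _ => hT i j, N, Perm.sum_sum_permMatrix_row])
    (fun j => by simp [sum_tsub_distrib _ fun i _ => hT i j, N, Perm.sum_sum_permMatrix_col])
  have hTS : Disjoint T S := by
    refine disjoint_left.2 fun σ hσ => ?_
    let i := Classical.arbitrary ι
    intro hσS
    have := Perm.one_le_sum_permMatrix_apply hσS i
    rw [hS, of_apply] at this
    have : 1 ≤ N i (σ i) := Perm.one_le_sum_permMatrix_apply hσ i
    omega
  refine ⟨T ∪ S, subset_union_left, ?_⟩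
  rw [sum_union hTS, hS]
  ext i j
  change N i j + (1 - N i j) = 1
  have := hT i j
  omega

end Matrix

/-- If `i ↦ i - σ i` is a bijection, it takes the value `q - σ p` at some `i₀ ∉ {p, q}`; there
`swap p q i₀ - σ i₀` agrees with its value at `p`. -/
lemma Equiv.not_injective_swap_sub_of_injective {G : Type*} [AddCommGroup G] [Finite G]
    [DecidableEq G] {σ : Perm G} (hσ : Function.Injective fun i => i - σ i) {p q : G}
    (hpq : p ≠ q) : ¬ Function.Injective fun i => swap p q i - σ i := by
  obtain ⟨i₀, hi₀⟩ := Finite.injective_iff_surjective.1 hσ (q - σ p)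
  have hi₀p : i₀ ≠ p := by
    rintro rfl
    exact hpq (sub_left_injective hi₀)
  have hi₀q : i₀ ≠ q := by
    rintro rfl
    exact hpq (σ.injective (sub_right_injective hi₀)).symm
  intro h
  refine hi₀p (h ?_)
  simpa [swap_apply_of_ne_of_ne hi₀p hi₀q] using hi₀

lemma permMat_eq_permMatrix (n : ℕ) : permMat n = fun π => π.permMatrix ℕ := by
  funext π
  ext i j
  simp [permMat]

namespace Decomposition

variable {n : ℕ} [NeZero n]

def ofSumEqOne (D : Finset (Perm (Fin n)))
    (hD : ∑ π ∈ D, π.permMatrix ℕ = Matrix.of fun _ _ => 1) : Decomposition n :=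
  ⟨D, by simpa using Perm.card_eq_of_sum_permMatrix_eq_one hD, by rwa [permMat_eq_permMatrix]⟩

lemma exists_mem_mem_of_forall_ne {α β : Perm (Fin n)} (hαβ : ∀ i, α i ≠ β i) :
    ∃ D : Decomposition n, α ∈ D.1 ∧ β ∈ D.1 := by
  have hne : α ≠ β := fun h => hαβ 0 (by rw [h])
  obtain ⟨D, hTD, hD⟩ := Matrix.exists_superset_sum_permMatrix_eq_one (T := {α, β}) fun i j => by
    rw [sum_pair hne]
    have := hαβ i
    simp only [Matrix.add_apply, Perm.permMatrix_apply]
    split_ifs <;> simp_all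
  exact ⟨ofSumEqOne D hD, hTD (mem_insert_self α _), hTD (mem_insert_of_mem (mem_singleton_self β))⟩

lemma trans_addRight_injective (σ : Perm (Fin n)) :
    Function.Injective fun c => σ.trans (Equiv.addRight c) := fun c c' h => by
  simpa using congrArg (fun π : Perm (Fin n) => π (σ.symm 0)) h

def coset (σ : Perm (Fin n)) : Decomposition n :=
  ofSumEqOne (univ.image fun c => σ.trans (Equiv.addRight c)) <| by
    ext i j
    rw [Matrix.sum_apply, sum_image fun _ _ _ _ h => trans_addRight_injective σ h]
    simp only [Perm.permMatrix_apply, trans_apply, coe_addRight, Matrix.of_apply,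
      ← eq_sub_iff_add_eq', sum_ite_eq', mem_univ, if_true]

lemma trans_addRight_mem_coset (σ : Perm (Fin n)) (c : Fin n) :
    σ.trans (Equiv.addRight c) ∈ (coset σ).1 :=
  mem_image_of_mem _ (mem_univ c)

lemma mem_coset_self (σ : Perm (Fin n)) : σ ∈ (coset σ).1 := by
  convert trans_addRight_mem_coset σ 0
  ext
  simp

end Decomposition

open Decomposition

lemma decompositionGraph_reachable_of_mem_of_mem {n : ℕ} {D E : Decomposition n}
    {π : Perm (Fin n)} (hD : π ∈ D.1) (hE : π ∈ E.1) : (decompositionGraph n).Reachable D E := by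
  by_cases h : D = E
  · exact h ▸ SimpleGraph.Reachable.refl D
  · exact SimpleGraph.Adj.reachable ⟨h, π, mem_inter.2 ⟨hD, hE⟩⟩

/-- If `τ - σ` misses a value `c`, then `σ` and `i ↦ τ i - c` disagree everywhere, so they lie
in a common decomposition that meets both cosets. -/
lemma decompositionGraph_reachable_coset_of_not_injective {n : ℕ} [NeZero n]
    {σ τ : Perm (Fin n)} (h : ¬ Function.Injective fun i => τ i - σ i) :
    (decompositionGraph n).Reachable (coset σ) (coset τ) := by
  obtain ⟨c, hc⟩ : ∃ c, ∀ i, τ i - σ i ≠ c := by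
    rw [Finite.injective_iff_surjective, Function.Surjective] at h
    push Not at h
    exact h
  obtain ⟨D, hσ, hτ⟩ := exists_mem_mem_of_forall_ne (α := σ) (β := τ.trans (Equiv.addRight (-c)))
    fun i h => hc i (by simp [h])
  exact (decompositionGraph_reachable_of_mem_of_mem (mem_coset_self σ) hσ).trans
    (decompositionGraph_reachable_of_mem_of_mem hτ (trans_addRight_mem_coset τ _))

lemma decompositionGraph_reachable_coset_one {n : ℕ} [NeZero n] (hn : 3 < n)
    (σ : Perm (Fin n)) : (decompositionGraph n).Reachable (coset σ) (coset 1) := by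
  by_cases hσ : Function.Injective fun i => i - σ i
  swap
  · exact decompositionGraph_reachable_coset_of_not_injective hσ
  let p : Fin n := ⟨0, by omega⟩
  let q : Fin n := ⟨1, by omega⟩
  let r : Fin n := ⟨2, by omega⟩
  let s : Fin n := ⟨3, by omega⟩
  have hτ : ¬ Function.Injective fun i => (1 : Perm (Fin n)) i - swap p q i := fun h => by
    have : r = s := h (by simp [p, q, r, s, swap_apply_of_ne_of_ne, Fin.ext_iff])
    simp [r, s, Fin.ext_iff] at this
  exact (decompositionGraph_reachable_coset_of_not_injective
    (Equiv.not_injective_swap_sub_of_injective hσ (by simp [p, q, Fin.ext_iff]))).trans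
    (decompositionGraph_reachable_coset_of_not_injective hτ)

/-- For `n > 3`, the graph on decompositions of the all-ones matrix into `n` permutation
matrices (adjacent iff sharing a common permutation) is connected. -/
theorem decompositionGraph_connected (n : ℕ) (hn : 3 < n) :
    (decompositionGraph n).Connected := by
  have : NeZero n := ⟨by omega⟩
  refine (SimpleGraph.connected_iff_exists_forall_reachable _).2 ⟨coset 1, fun D => ?_⟩
  obtain ⟨σ, hσ⟩ : D.1.Nonempty := card_pos.1 (by rw [D.2.1]; omega)
  exact ((decompositionGraph_reachable_of_mem_of_mem hσ (mem_coset_self σ)).trans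
    (decompositionGraph_reachable_coset_one hn σ)).symm
end

section
/- The toric ideal I_{S_3} is the principal ideal generated by the single binomial x_{123}·x_{231}·x_{312} − x_{132}·x_{213}·x_{321}, where each subscript is the one-line notation of a permutation of {1,2,3}. -/
/-- The toric ideal `I_{S_3}`: the kernel of
`φ : ℂ[x_π : π ∈ S_3] → ℂ[t_{ij}]`, `x_π ↦ ∏_i t_{i, π(i)}`. -/
noncomputable def toricIdeal3 : Ideal (MvPolynomial (Equiv.Perm (Fin 3)) ℂ) :=
  RingHom.ker (MvPolynomial.aeval fun π : Equiv.Perm (Fin 3) =>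
    ∏ i : Fin 3, MvPolynomial.X (R := ℂ) (i, π i) :
      MvPolynomial (Equiv.Perm (Fin 3)) ℂ →ₐ[ℂ] MvPolynomial (Fin 3 × Fin 3) ℂ).toRingHom

/-- The permutation with one-line notation `231` (0-indexed: `0 ↦ 1, 1 ↦ 2, 2 ↦ 0`). -/
def p231 : Equiv.Perm (Fin 3) := finRotate 3

/-!
The toric map sends a monomial `x^u` to `t^{A u}`, where `A u = ∑ u(π) e(π)` and `e(π)` is the
permutation matrix of `π`. Both `x₁₂₃x₂₃₁x₃₁₂` and `x₁₃₂x₂₁₃x₃₂₁` go to the all-ones matrix, so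
the binomial lies in the kernel. Conversely, trading the largest power of `x₁₃₂x₂₁₃x₃₂₁` dividing a
monomial for the same power of `x₁₂₃x₂₃₁x₃₁₂` changes it only modulo the binomial, and leaves some
transposition with exponent zero. The integer kernel of `A` is spanned by the difference of the two
exponent vectors, so `A` is injective on such reduced exponents: reducing every monomial of a
kernel element gives a kernel element whose coefficients reappear in its image, hence it is zero.
-/

open MvPolynomial Equiv

section MonomialMap

variable {σ τ R : Type*}

theorem aeval_monomial_one_monomial [CommSemiring R] (m : σ → τ →₀ ℕ) (u : σ →₀ ℕ) (c : R) :
    aeval (fun s => monomial (m s) (1 : R)) (monomial u c) =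
      monomial (Finsupp.linearCombination ℕ m u) c := by
  rw [aeval_monomial, Finsupp.linearCombination_apply, monomial_finsupp_sum_index, algebraMap_eq]
  simp only [monomial_pow, one_pow]

variable [CommRing R] (φ : MvPolynomial σ R →ₐ[R] MvPolynomial τ R) (A : (σ →₀ ℕ) → τ →₀ ℕ)
  (hφ : ∀ u c, φ (monomial u c) = monomial (A u) c)
include hφ

theorem coeff_map_of_injOn {S : Set (σ →₀ ℕ)} (hA : S.InjOn A) {q : MvPolynomial σ R}
    (hq : ↑q.support ⊆ S) {w : σ →₀ ℕ} (hw : w ∈ S) : coeff (A w) (φ q) = coeff w q := by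
  classical
  conv_lhs => rw [q.as_sum, map_sum]
  simp only [hφ, coeff_sum, coeff_monomial]
  rw [Finset.sum_eq_single w]
  · simp
  · intro u hu huw
    rw [if_neg fun h => huw (hA (hq hu) hw h)]
  · intro hw'
    simp [notMem_support_iff.1 hw']

theorem ker_eq_of_reduce (I : Ideal (MvPolynomial σ R)) (hI : I ≤ RingHom.ker φ)
    (r : (σ →₀ ℕ) → σ →₀ ℕ) (hr : ∀ u, monomial u (1 : R) - monomial (r u) 1 ∈ I)
    (hA : (Set.range r).InjOn A) : RingHom.ker φ = I := by
  classical
  refine le_antisymm (fun p hp => ?_) hI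
  set q := ∑ u ∈ p.support, monomial (r u) (coeff u p) with hq_def
  have hpq : p - q ∈ I := by
    nth_rewrite 1 [p.as_sum]
    rw [← Finset.sum_sub_distrib]
    refine I.sum_mem fun u _ => ?_
    simpa only [mul_sub, C_mul_monomial, mul_one] using I.mul_mem_left (C (coeff u p)) (hr u)
  have hq : φ q = 0 := by
    simpa [RingHom.mem_ker.1 hp] using RingHom.mem_ker.1 (hI hpq)
  have hsupp : ↑q.support ⊆ Set.range r := by
    intro w hw
    rw [Finset.mem_coe, mem_support_iff, hq_def, coeff_sum] at hw
    obtain ⟨u, -, hu⟩ := Finset.exists_ne_zero_of_sum_ne_zero hw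
    rw [coeff_monomial] at hu
    exact ⟨u, of_not_not fun h => hu (if_neg h)⟩
  have hq0 : q = 0 := by
    ext w
    by_cases hw : w ∈ Set.range r
    · rw [← coeff_map_of_injOn φ A hφ hA hsupp hw, hq, coeff_zero, coeff_zero]
    · rw [coeff_zero, ← notMem_support_iff]; exact fun h => hw (hsupp h)
  simpa [hq0] using hpq

end MonomialMap

section PermExponent

variable {n : ℕ}

noncomputable def permExponent (π : Perm (Fin n)) : Fin n × Fin n →₀ ℕ :=
  ∑ i, Finsupp.single (i, π i) 1

theorem prod_X_eq_monomial_permExponent {R : Type*} [CommSemiring R] (π : Perm (Fin n)) :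
    ∏ i, X (R := R) (i, π i) = monomial (permExponent π) 1 := by
  rw [permExponent, monomial_sum_one]
  rfl

theorem permExponent_apply (π : Perm (Fin n)) (i j : Fin n) :
    permExponent π (i, j) = if π i = j then 1 else 0 := by
  rw [permExponent, Finsupp.finsetSum_apply, Finset.sum_eq_single i]
  · simp [Finsupp.single_apply]
  · intro k _ hk
    simp [Ne.symm hk]
  · simp

theorem linearCombination_permExponent_apply (u : Perm (Fin n) →₀ ℕ) (i j : Fin n) :
    Finsupp.linearCombination ℕ permExponent u (i, j) = ∑ π, if π i = j then u π else 0 := by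
  rw [Finsupp.linearCombination_apply, Finsupp.sum_fintype _ _ (by simp)]
  simp [Finsupp.finsetSum_apply, permExponent_apply]

end PermExponent

theorem toricIdeal3_eq_ker :
    toricIdeal3 = RingHom.ker (aeval fun π : Perm (Fin 3) => monomial (permExponent π) (1 : ℂ)) := by
  simp_rw [toricIdeal3, prod_X_eq_monomial_permExponent]
  rfl

theorem perm_fin_three_cases (π : Perm (Fin 3)) :
    π = 1 ∨ π = p231 ∨ π = p231⁻¹ ∨ π = swap 0 1 ∨ π = swap 0 2 ∨ π = swap 1 2 := by
  revert π
  decide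

theorem sum_perm_fin_three {M : Type*} [AddCommMonoid M] (f : Perm (Fin 3) → M) :
    ∑ π, f π = f 1 + f p231 + f p231⁻¹ + f (swap 0 1) + f (swap 0 2) + f (swap 1 2) := by
  rw [show (Finset.univ : Finset (Perm (Fin 3))) =
      {1, p231, p231⁻¹, swap 0 1, swap 0 2, swap 1 2} by decide,
    Finset.sum_insert (by decide), Finset.sum_insert (by decide), Finset.sum_insert (by decide),
    Finset.sum_insert (by decide), Finset.sum_insert (by decide), Finset.sum_singleton]
  abel

def reducedExponents : Set (Perm (Fin 3) →₀ ℕ) :=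
  {u | u (swap 0 1) = 0 ∨ u (swap 0 2) = 0 ∨ u (swap 1 2) = 0}

theorem injOn_linearCombination_reducedExponents :
    reducedExponents.InjOn (Finsupp.linearCombination ℕ permExponent) := by
  intro u hu v hv h
  have e : ∀ i j : Fin 3, _ := fun i j => DFunLike.congr_fun h (i, j)
  have h00 := e 0 0; have h01 := e 0 1; have h02 := e 0 2
  have h10 := e 1 0; have h11 := e 1 1; have h12 := e 1 2
  simp (config := {decide := true}) only [linearCombination_permExponent_apply,
    sum_perm_fin_three, ↓reduceIte, add_zero, zero_add] at h00 h01 h02 h10 h11 h12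
  ext π
  rcases perm_fin_three_cases π with rfl | rfl | rfl | rfl | rfl | rfl <;>
    rcases hu with hu | hu | hu <;> rcases hv with hv | hv | hv <;> omega

noncomputable def evenExponent : Perm (Fin 3) →₀ ℕ :=
  Finsupp.single 1 1 + Finsupp.single p231 1 + Finsupp.single p231⁻¹ 1

noncomputable def oddExponent : Perm (Fin 3) →₀ ℕ :=
  Finsupp.single (swap 1 2) 1 + Finsupp.single (swap 0 1) 1 + Finsupp.single (swap 0 2) 1

theorem linearCombination_evenExponent :
    Finsupp.linearCombination ℕ permExponent evenExponent =
      Finsupp.linearCombination ℕ permExponent oddExponent := by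
  ext ⟨i, j⟩
  simp only [evenExponent, oddExponent, map_add, Finsupp.linearCombination_single, one_smul,
    Finsupp.add_apply, permExponent_apply]
  fin_cases i <;> fin_cases j <;> decide

theorem monomial_evenExponent_sub_monomial_oddExponent :
    (monomial evenExponent 1 - monomial oddExponent 1 : MvPolynomial (Perm (Fin 3)) ℂ) =
      X 1 * X p231 * X p231⁻¹ - X (swap 1 2) * X (swap 0 1) * X (swap 0 2) := by
  simp only [evenExponent, oddExponent, X, monomial_mul, mul_one]

def oddMultiplicity (u : Perm (Fin 3) →₀ ℕ) : ℕ :=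
  min (u (swap 0 1)) (min (u (swap 0 2)) (u (swap 1 2)))

noncomputable def reduceExponent (u : Perm (Fin 3) →₀ ℕ) : Perm (Fin 3) →₀ ℕ :=
  u - oddMultiplicity u • oddExponent + oddMultiplicity u • evenExponent

theorem oddMultiplicity_smul_oddExponent_le (u : Perm (Fin 3) →₀ ℕ) :
    oddMultiplicity u • oddExponent ≤ u := by
  intro π
  rcases perm_fin_three_cases π with rfl | rfl | rfl | rfl | rfl | rfl <;>
    simp (config := {decide := true}) [oddExponent, oddMultiplicity]

theorem reduceExponent_mem_reducedExponents (u : Perm (Fin 3) →₀ ℕ) :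
    reduceExponent u ∈ reducedExponents := by
  simp (config := {decide := true}) [reducedExponents, reduceExponent, oddMultiplicity,
    oddExponent, evenExponent]
  omega

theorem monomial_sub_monomial_reduceExponent_mem (u : Perm (Fin 3) →₀ ℕ) :
    (monomial u 1 - monomial (reduceExponent u) 1 : MvPolynomial (Perm (Fin 3)) ℂ) ∈
      Ideal.span {monomial evenExponent 1 - monomial oddExponent 1} := by
  set k := oddMultiplicity u
  have hu : monomial u (1 : ℂ) = monomial (u - k • oddExponent) 1 * monomial oddExponent 1 ^ k := by
    rw [monomial_pow, one_pow, monomial_mul, one_mul,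
      tsub_add_cancel_of_le (oddMultiplicity_smul_oddExponent_le u)]
  have hr : monomial (reduceExponent u) (1 : ℂ) =
      monomial (u - k • oddExponent) 1 * monomial evenExponent 1 ^ k := by
    rw [monomial_pow, one_pow, monomial_mul, one_mul, reduceExponent]
  rw [hu, hr, ← mul_sub, Ideal.mem_span_singleton]
  refine dvd_mul_of_dvd_right ?_ _
  rw [← neg_sub, neg_dvd]
  exact sub_dvd_pow_sub_pow _ _ k

/-- `I_{S_3}` is the principal ideal generated by the binomial
`x_{123} x_{231} x_{312} - x_{132} x_{213} x_{321}` (one-line notation, where e.g. the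
permutation `132` is the 0-indexed transposition `Equiv.swap 1 2`). -/
theorem toricIdeal3_eq_span_singleton :
    toricIdeal3 = Ideal.span
      {MvPolynomial.X (R := ℂ) (1 : Equiv.Perm (Fin 3)) * MvPolynomial.X p231
          * MvPolynomial.X p231⁻¹
        - MvPolynomial.X (Equiv.swap 1 2) * MvPolynomial.X (Equiv.swap 0 1)
          * MvPolynomial.X (Equiv.swap 0 2)} := by
  rw [← monomial_evenExponent_sub_monomial_oddExponent, toricIdeal3_eq_ker]
  have hφ := aeval_monomial_one_monomial (R := ℂ) (permExponent (n := 3))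
  refine ker_eq_of_reduce _ _ hφ _ ?_ reduceExponent monomial_sub_monomial_reduceExponent_mem
    (injOn_linearCombination_reducedExponents.mono
      (Set.range_subset_iff.2 reduceExponent_mem_reducedExponents))
  rw [Ideal.span_le, Set.singleton_subset_iff, SetLike.mem_coe, RingHom.mem_ker, map_sub, hφ, hφ,
    linearCombination_evenExponent, sub_self]
end
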